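/- arXiv:1511.05412 — 4 statements merged into one kernel-verified Lean document; each statement's English description precedes it below -/
import Mathlib

section
/- In the Hecke-Clifford superalgebra H^c_{r,R}, the assignment T_i ↦ c_i T_i c_{i+1}, c_j ↦ c_j extends to an algebra involution ψ of H^c_{r,R}, i.e., the elements Ṫ_i := c_i T_i c_{i+1} together with c_1,...,c_r satisfy the same defining relations as T_i, c_j. -/
namespace HCPaper

noncomputable section

open MulOpposite

/-- Generators of the Hecke-Clifford superalgebra: `Sum.inl i` is `T_{i+1}` (0-based `i < r-1`),
`Sum.inr j` is `c_{j+1}` (0-based `j < r`). -/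
abbrev Gen (r : ℕ) := (Fin (r - 1)) ⊕ (Fin r)

/-- The index `i` viewed in `Fin r` (the first of the two indices moved by `T_i`). -/
def loIdx {r : ℕ} (i : Fin (r - 1)) : Fin r := ⟨i.val, by have := i.isLt; omega⟩

/-- The index `i+1` viewed in `Fin r`. -/
def hiIdx {r : ℕ} (i : Fin (r - 1)) : Fin r := ⟨i.val + 1, by have := i.isLt; omega⟩

def Tf (R : Type) [CommRing R] (r : ℕ) (i : Fin (r - 1)) : FreeAlgebra R (Gen r) :=
  FreeAlgebra.ι R (Sum.inl i)

def Cf (R : Type) [CommRing R] (r : ℕ) (j : Fin r) : FreeAlgebra R (Gen r) :=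
  FreeAlgebra.ι R (Sum.inr j)

/-- The defining relations of the Hecke-Clifford superalgebra `H^c_{r,R}`. -/
inductive HCRel (R : Type) [CommRing R] (q : R) (r : ℕ) :
    FreeAlgebra R (Gen r) → FreeAlgebra R (Gen r) → Prop
  | csq (j : Fin r) : HCRel R q r (Cf R r j * Cf R r j) (-1)
  | canti (i j : Fin r) (h : i ≠ j) :
      HCRel R q r (Cf R r i * Cf R r j) (-(Cf R r j * Cf R r i))
  | quad (i : Fin (r - 1)) :
      HCRel R q r ((Tf R r i - algebraMap R _ q) * (Tf R r i + 1)) 0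
  | commTT (i i' : Fin (r - 1)) (h : i.val + 1 < i'.val) :
      HCRel R q r (Tf R r i * Tf R r i') (Tf R r i' * Tf R r i)
  | braid (i i' : Fin (r - 1)) (h : i'.val = i.val + 1) :
      HCRel R q r (Tf R r i * Tf R r i' * Tf R r i) (Tf R r i' * Tf R r i * Tf R r i')
  | commTC (i : Fin (r - 1)) (j : Fin r) (h1 : j.val ≠ i.val) (h2 : j.val ≠ i.val + 1) :
      HCRel R q r (Tf R r i * Cf R r j) (Cf R r j * Tf R r i)
  | TClo (i : Fin (r - 1)) :
      HCRel R q r (Tf R r i * Cf R r (loIdx i)) (Cf R r (hiIdx i) * Tf R r i)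
  | TChi (i : Fin (r - 1)) :
      HCRel R q r (Tf R r i * Cf R r (hiIdx i))
        (Cf R r (loIdx i) * Tf R r i -
          algebraMap R _ (q - 1) * (Cf R r (loIdx i) - Cf R r (hiIdx i)))

/-- The Hecke-Clifford superalgebra `H^c_{r,R}` with parameter `q`, as a quotient of
the free algebra by the defining relations. -/
abbrev HC (R : Type) [CommRing R] (q : R) (r : ℕ) := RingQuot (HCRel R q r)

/-- The generator `T_{i+1}` of `H^c_{r,R}` (0-based index). -/
def TT (R : Type) [CommRing R] (q : R) (r : ℕ) (i : Fin (r - 1)) : HC R q r :=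
  RingQuot.mkAlgHom R (HCRel R q r) (Tf R r i)

/-- The generator `c_{j+1}` of `H^c_{r,R}` (0-based index). -/
def CC (R : Type) [CommRing R] (q : R) (r : ℕ) (j : Fin r) : HC R q r :=
  RingQuot.mkAlgHom R (HCRel R q r) (Cf R r j)

end

end HCPaper

namespace HCProof

section Abstract
variable {R : Type} [CommRing R] {q : R} {A : Type} [Ring A] [Algebra R A]

private lemma tr {x y z : A} (h : x * y = z) (w : A) : x * (y * w) = z * w := by
  rw [← mul_assoc, h]

lemma Aquad (a b T : A)
    (haa : a*a = -1) (hbb : b*b = -1) (hba : b*a = -(a*b))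
    (hTa : T*a = b*T) (hTb : T*b = a*T - (q-1)•a + (q-1)•b)
    (hTT : T*T = (q-1)•T + q•(1:A)) :
    (a*T*b - algebraMap R A q) * (a*T*b + 1) = 0 := by
  rw [Algebra.algebraMap_eq_smul_one]
  simp only [mul_assoc, mul_add, mul_sub, sub_mul, add_mul, mul_one, one_mul,
    mul_neg, neg_mul, neg_neg, mul_smul_comm, smul_mul_assoc,
    tr haa, tr hbb, tr hba, tr hTa, tr hTb, tr hTT,
    haa, hbb, hba, hTa, hTb, hTT]
  module

lemma ATClo (a b T : A)
    (haa : a*a = -1) (hbb : b*b = -1) (hba : b*a = -(a*b))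
    (hTa : T*a = b*T) (hTb : T*b = a*T - (q-1)•a + (q-1)•b) :
    (a*T*b) * a = b * (a*T*b) := by
  simp only [mul_assoc, mul_add, mul_sub, sub_mul, add_mul, mul_one, one_mul,
    mul_neg, neg_mul, neg_neg, mul_smul_comm, smul_mul_assoc,
    tr haa, tr hbb, tr hba, tr hTa, tr hTb,
    haa, hbb, hba, hTa, hTb]
  module

lemma ATChi (a b T : A)
    (haa : a*a = -1) (hbb : b*b = -1) (hba : b*a = -(a*b))
    (hTa : T*a = b*T) (hTb : T*b = a*T - (q-1)•a + (q-1)•b) :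
    (a*T*b) * b = a * (a*T*b) - (algebraMap R A q - 1) * (a - b) := by
  rw [Algebra.algebraMap_eq_smul_one]
  simp only [mul_assoc, mul_add, mul_sub, sub_mul, add_mul, mul_one, one_mul,
    mul_neg, neg_mul, neg_neg, mul_smul_comm, smul_mul_assoc,
    tr haa, tr hbb, tr hba, tr hTa, tr hTb,
    haa, hbb, hba, hTa, hTb]
  module

lemma AcommTC (a b T d : A)
    (had : a*d = -(d*a)) (hbd : b*d = -(d*b)) (hTd : T*d = d*T) :
    (a*T*b) * d = d * (a*T*b) := by
  simp only [mul_assoc, mul_neg, neg_mul, neg_neg,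
    tr had, tr hbd, tr hTd, had, hbd, hTd]

lemma AcommTT (a b T a' b' T' : A)
    (haa' : a*a' = -(a'*a)) (hba' : b*a' = -(a'*b))
    (hab' : a*b' = -(b'*a)) (hbb' : b*b' = -(b'*b))
    (hTa' : T*a' = a'*T) (hTb' : T*b' = b'*T)
    (haT' : a*T' = T'*a) (hbT' : b*T' = T'*b)
    (hTT' : T*T' = T'*T) :
    (a*T*b) * (a'*T'*b') = (a'*T'*b') * (a*T*b) := by
  simp only [mul_assoc, mul_neg, neg_mul, neg_neg,
    tr haa', tr hba', tr hab', tr hbb', tr hTa', tr hTb', tr haT', tr hbT', tr hTT',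
    haa', hba', hab', hbb', hTa', hTb', haT', hbT', hTT']

lemma Abraid (a b c S U : A)
    (haa : a*a = -1) (hbb : b*b = -1) (hcc : c*c = -1)
    (hba : b*a = -(a*b)) (hca : c*a = -(a*c)) (hcb : c*b = -(b*c))
    (hSa : S*a = b*S) (hSb : S*b = a*S - (q-1)•a + (q-1)•b) (hSc : S*c = c*S)
    (hUb : U*b = c*U) (hUc : U*c = b*U - (q-1)•b + (q-1)•c) (hUa : U*a = a*U)
    (hSS : S*S = (q-1)•S + q•(1:A)) (hUU : U*U = (q-1)•U + q•(1:A))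
    (hbr : S*U*S = U*S*U) :
    (a*S*b) * (b*U*c) * (a*S*b) = (b*U*c) * (a*S*b) * (b*U*c) := by
  have hbr2 : S*(U*S) = U*(S*U) := by rw [← mul_assoc, hbr, mul_assoc]
  have hbr' : ∀ w, S*(U*(S*w)) = U*(S*(U*w)) := fun w => by
    rw [← mul_assoc, ← mul_assoc, mul_assoc S U S, hbr2, ← mul_assoc, mul_assoc, mul_assoc]
  simp only [mul_assoc, mul_add, mul_sub, sub_mul, add_mul, mul_one, one_mul,
    mul_neg, neg_mul, neg_neg, mul_smul_comm, smul_mul_assoc,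
    tr haa, tr hbb, tr hcc, tr hba, tr hca, tr hcb,
    tr hSa, tr hSb, tr hSc, tr hUa, tr hUb, tr hUc, tr hSS, tr hUU, hbr',
    haa, hbb, hcc, hba, hca, hcb, hSa, hSb, hSc, hUa, hUb, hUc, hSS, hUU, hbr2]
  module

lemma Ainv (a b T : A) (haa : a*a = -1) (hbb : b*b = -1) :
    a * (a*T*b) * b = T := by
  simp only [mul_assoc, tr haa, hbb, mul_neg, mul_one, neg_mul, neg_neg, one_mul]

end Abstract

open HCPaper

variable {R : Type} [CommRing R] {q : R} {r : ℕ}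

lemma rel_eq {x y : FreeAlgebra R (Gen r)} (h : HCRel R q r x y) :
    RingQuot.mkAlgHom R (HCRel R q r) x = RingQuot.mkAlgHom R (HCRel R q r) y :=
  RingQuot.mkAlgHom_rel R h

lemma mkT (i : Fin (r-1)) : RingQuot.mkAlgHom R (HCRel R q r) (Tf R r i) = TT R q r i := rfl
lemma mkC (j : Fin r) : RingQuot.mkAlgHom R (HCRel R q r) (Cf R r j) = CC R q r j := rfl

lemma csq' (j : Fin r) : CC R q r j * CC R q r j = -1 := by
  have := rel_eq (q := q) (HCRel.csq j)
  simpa only [map_mul, map_neg, map_one, mkC] using this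

lemma canti' {i j : Fin r} (h : i ≠ j) : CC R q r i * CC R q r j = -(CC R q r j * CC R q r i) := by
  have := rel_eq (q := q) (HCRel.canti i j h)
  simpa only [map_mul, map_neg, mkC] using this

lemma quad' (i : Fin (r-1)) :
    TT R q r i * TT R q r i = (q-1) • TT R q r i + q • (1 : HC R q r) := by
  have h := rel_eq (q := q) (HCRel.quad i)
  rw [map_mul, map_sub, map_add, map_one, map_zero, AlgHom.commutes, mkT] at h
  have e : TT R q r i * TT R q r i =
      (TT R q r i - algebraMap R _ q) * (TT R q r i + 1)
        + (q-1) • TT R q r i + q • (1 : HC R q r) := by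
    simp only [Algebra.smul_def, map_sub, map_one, sub_mul, mul_add, mul_one, mul_sub, one_mul]
    abel
  rw [e, h, zero_add]

lemma commTT' {i i' : Fin (r-1)} (h : i.val + 1 < i'.val) :
    TT R q r i * TT R q r i' = TT R q r i' * TT R q r i := by
  have := rel_eq (q := q) (HCRel.commTT i i' h); simpa only [map_mul, mkT] using this

lemma braid' {i i' : Fin (r-1)} (h : i'.val = i.val + 1) :
    TT R q r i * TT R q r i' * TT R q r i = TT R q r i' * TT R q r i * TT R q r i' := by
  have := rel_eq (q := q) (HCRel.braid i i' h); simpa only [map_mul, mkT] using this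

lemma commTC' {i : Fin (r-1)} {j : Fin r} (h1 : j.val ≠ i.val) (h2 : j.val ≠ i.val + 1) :
    TT R q r i * CC R q r j = CC R q r j * TT R q r i := by
  have := rel_eq (q := q) (HCRel.commTC i j h1 h2)
  simpa only [map_mul, mkT, mkC] using this

lemma TClo' (i : Fin (r-1)) :
    TT R q r i * CC R q r (loIdx i) = CC R q r (hiIdx i) * TT R q r i := by
  have := rel_eq (q := q) (HCRel.TClo i); simpa only [map_mul, mkT, mkC] using this

lemma TChi' (i : Fin (r-1)) :
    TT R q r i * CC R q r (hiIdx i) =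
      CC R q r (loIdx i) * TT R q r i
        - (q-1) • CC R q r (loIdx i) + (q-1) • CC R q r (hiIdx i) := by
  have := rel_eq (q := q) (HCRel.TChi i)
  simp only [map_mul, map_sub, map_one, AlgHom.commutes, mkT, mkC] at this
  rw [this]
  simp only [Algebra.smul_def, map_sub, map_one, mul_sub, sub_mul, one_mul]
  abel

variable (R q r) in
noncomputable def gmap : FreeAlgebra R (Gen r) →ₐ[R] HC R q r :=
  FreeAlgebra.lift R (fun g => match g with
    | Sum.inl i => CC R q r (loIdx i) * TT R q r i * CC R q r (hiIdx i)
    | Sum.inr j => CC R q r j)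

lemma gmap_T (i : Fin (r-1)) :
    gmap R q r (Tf R r i) = CC R q r (loIdx i) * TT R q r i * CC R q r (hiIdx i) := by
  simp [gmap, Tf]

lemma gmap_C (j : Fin r) : gmap R q r (Cf R r j) = CC R q r j := by
  simp [gmap, Cf]

lemma fne {a b : Fin r} (h : a.val ≠ b.val) : a ≠ b := fun e => h (congrArg Fin.val e)

@[simp] lemma loIdx_val (i : Fin (r-1)) : (loIdx i : Fin r).val = i.val := rfl
@[simp] lemma hiIdx_val (i : Fin (r-1)) : (hiIdx i : Fin r).val = i.val + 1 := rfl

lemma grel : ∀ ⦃x y : FreeAlgebra R (Gen r)⦄, HCRel R q r x y → gmap R q r x = gmap R q r y := by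
  intro x y h
  induction h with
  | csq j =>
      simp only [map_mul, map_neg, map_one, gmap_C]; exact csq' j
  | canti i j h =>
      simp only [map_mul, map_neg, gmap_C]; exact canti' h
  | quad i =>
      simp only [map_mul, map_sub, map_add, map_one, map_zero, AlgHom.commutes, gmap_T]
      exact Aquad _ _ _ (csq' _) (csq' _)
        (canti' (fne (by simp only [loIdx_val, hiIdx_val]; omega)))
        (TClo' i) (TChi' i) (quad' i)
  | commTT i i' h =>
      simp only [map_mul, gmap_T]
      exact AcommTT _ _ _ _ _ _
        (canti' (fne (by simp only [loIdx_val]; omega)))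
        (canti' (fne (by simp only [loIdx_val, hiIdx_val]; omega)))
        (canti' (fne (by simp only [loIdx_val, hiIdx_val]; omega)))
        (canti' (fne (by simp only [hiIdx_val]; omega)))
        (commTC' (by simp only [loIdx_val]; omega) (by simp only [loIdx_val]; omega))
        (commTC' (by simp only [hiIdx_val]; omega) (by simp only [hiIdx_val]; omega))
        ((commTC' (by simp only [loIdx_val]; omega) (by simp only [loIdx_val]; omega)).symm)
        ((commTC' (by simp only [hiIdx_val]; omega) (by simp only [hiIdx_val]; omega)).symm)
        (commTT' h)
  | braid i i' h =>
      simp only [map_mul, gmap_T]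
      have hidx : loIdx i' = hiIdx i := by
        apply Fin.ext; simp only [loIdx_val, hiIdx_val, h]
      rw [hidx]
      have hUb : TT R q r i' * CC R q r (hiIdx i) = CC R q r (hiIdx i') * TT R q r i' := by
        rw [← hidx]; exact TClo' i'
      have hUc : TT R q r i' * CC R q r (hiIdx i') =
          CC R q r (hiIdx i) * TT R q r i' - (q-1) • CC R q r (hiIdx i)
            + (q-1) • CC R q r (hiIdx i') := by
        rw [← hidx]; exact TChi' i'
      exact Abraid _ _ _ _ _ (csq' _) (csq' _) (csq' _)
        (canti' (fne (by simp only [loIdx_val, hiIdx_val]; omega)))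
        (canti' (fne (by simp only [loIdx_val, hiIdx_val]; omega)))
        (canti' (fne (by simp only [hiIdx_val]; omega)))
        (TClo' i) (TChi' i)
        (commTC' (by simp only [hiIdx_val]; omega) (by simp only [hiIdx_val]; omega))
        hUb hUc
        (commTC' (by simp only [loIdx_val]; omega) (by simp only [loIdx_val]; omega))
        (quad' i) (quad' i') (braid' h)
  | commTC i j h1 h2 =>
      simp only [map_mul, gmap_T, gmap_C]
      exact AcommTC _ _ _ _
        (canti' (fne (by simp only [loIdx_val]; omega)))
        (canti' (fne (by simp only [hiIdx_val]; omega)))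
        (commTC' h1 h2)
  | TClo i =>
      simp only [map_mul, gmap_T, gmap_C]
      exact ATClo _ _ _ (csq' _) (csq' _)
        (canti' (fne (by simp only [loIdx_val, hiIdx_val]; omega)))
        (TClo' i) (TChi' i)
  | TChi i =>
      simp only [map_mul, map_sub, map_one, AlgHom.commutes, gmap_T, gmap_C]
      exact ATChi _ _ _ (csq' _) (csq' _)
        (canti' (fne (by simp only [loIdx_val, hiIdx_val]; omega)))
        (TClo' i) (TChi' i)

variable (R q r) in
noncomputable def psi : HC R q r →ₐ[R] HC R q r :=
  RingQuot.liftAlgHom R (⟨gmap R q r, grel⟩ :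
    {f : FreeAlgebra R (Gen r) →ₐ[R] HC R q r //
      ∀ ⦃x y⦄, HCRel R q r x y → f x = f y})

lemma psi_T (i : Fin (r-1)) :
    psi R q r (TT R q r i) = CC R q r (loIdx i) * TT R q r i * CC R q r (hiIdx i) := by
  show RingQuot.liftAlgHom R (⟨gmap R q r, grel⟩ :
    {f : FreeAlgebra R (Gen r) →ₐ[R] HC R q r //
      ∀ ⦃x y⦄, HCRel R q r x y → f x = f y})
      (RingQuot.mkAlgHom R (HCRel R q r) (Tf R r i)) = _
  rw [RingQuot.liftAlgHom_mkAlgHom_apply, gmap_T]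

lemma psi_C (j : Fin r) : psi R q r (CC R q r j) = CC R q r j := by
  show RingQuot.liftAlgHom R (⟨gmap R q r, grel⟩ :
    {f : FreeAlgebra R (Gen r) →ₐ[R] HC R q r //
      ∀ ⦃x y⦄, HCRel R q r x y → f x = f y})
      (RingQuot.mkAlgHom R (HCRel R q r) (Cf R r j)) = _
  rw [RingQuot.liftAlgHom_mkAlgHom_apply, gmap_C]

lemma psi_invol (x : HC R q r) : psi R q r (psi R q r x) = x := by
  have hc : (psi R q r).comp (psi R q r) = AlgHom.id R (HC R q r) := by
    apply RingQuot.ringQuot_ext'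
    apply FreeAlgebra.hom_ext
    funext g
    match g with
    | Sum.inl i =>
        show psi R q r (psi R q r (TT R q r i)) = TT R q r i
        rw [psi_T, map_mul, map_mul, psi_C, psi_C, psi_T]
        exact Ainv _ _ _ (csq' _) (csq' _)
    | Sum.inr j =>
        show psi R q r (psi R q r (CC R q r j)) = CC R q r j
        rw [psi_C, psi_C]
  calc psi R q r (psi R q r x) = ((psi R q r).comp (psi R q r)) x := rfl
    _ = x := by rw [hc]; rfl

end HCProof

open HCPaper in
/-- The assignment `T_i ↦ c_i T_i c_{i+1}`, `c_j ↦ c_j` extends to an algebra involution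
`ψ` of the Hecke-Clifford superalgebra `H^c_{r,R}`. -/
theorem stmt2 (R : Type) [CommRing R] (h2 : ringChar R ≠ 2) (q : R) (r : ℕ) :
    ∃ ψ : HC R q r →ₐ[R] HC R q r,
      (∀ x : HC R q r, ψ (ψ x) = x) ∧
      (∀ i : Fin (r - 1),
        ψ (TT R q r i) = CC R q r (loIdx i) * TT R q r i * CC R q r (hiIdx i)) ∧
      (∀ j : Fin r, ψ (CC R q r j) = CC R q r j) := by
  exact ⟨HCProof.psi R q r, HCProof.psi_invol, HCProof.psi_T, HCProof.psi_C⟩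
end

section
/- In the Hecke-Clifford superalgebra H^c_{r,R}, for 1 ≤ k ≤ r-1 and 1 ≤ l ≤ r: T_{r-1}···T_k c_l = c_l T_{r-1}···T_k if l ≤ k-1; T_{r-1}···T_k c_k = c_r T_{r-1}···T_k; and for k+1 ≤ l ≤ r, T_{r-1}···T_k c_l = c_{l-1} T_{r-1}···T_k - (q-1) T_{l-2}···T_k (c_k - c_r) T_{r-1}···T_l (with the convention that an empty product of T's equals 1). -/
namespace HCPaper

noncomputable section

/-- The generator `T_i` with 1-based index `1 ≤ i ≤ r-1` (junk value `1` otherwise). -/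
def Tn (R : Type) [CommRing R] (q : R) (r : ℕ) (i : ℕ) : HC R q r :=
  if h : 1 ≤ i ∧ i ≤ r - 1 then TT R q r ⟨i - 1, by omega⟩ else 1

/-- The generator `c_j` with 1-based index `1 ≤ j ≤ r` (junk value `1` otherwise). -/
def cn (R : Type) [CommRing R] (q : R) (r : ℕ) (j : ℕ) : HC R q r :=
  if h : 1 ≤ j ∧ j ≤ r then CC R q r ⟨j - 1, by omega⟩ else 1

/-- The descending product `T_a T_{a-1} ⋯ T_b` (1-based indices); equals `1` if `b > a`. -/
def Tdown (R : Type) [CommRing R] (q : R) (r : ℕ) (a b : ℕ) : HC R q r :=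
  (((List.range' b (a + 1 - b)).reverse).map (Tn R q r)).prod

end

end HCPaper

namespace HCPaper

noncomputable section

variable (R : Type) [CommRing R] (q : R) (r : ℕ)

lemma hc_rel {x y : FreeAlgebra R (Gen r)} (h : HCRel R q r x y) :
    RingQuot.mkAlgHom R (HCRel R q r) x = RingQuot.mkAlgHom R (HCRel R q r) y :=
  RingQuot.mkAlgHom_rel R h

lemma Tn_cn_comm {i j : ℕ} (hi1 : 1 ≤ i) (hi2 : i ≤ r - 1) (hj1 : 1 ≤ j) (hj2 : j ≤ r)
    (h1 : j ≠ i) (h2 : j ≠ i + 1) :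
    Tn R q r i * cn R q r j = cn R q r j * Tn R q r i := by
  rw [Tn, cn, dif_pos ⟨hi1, hi2⟩, dif_pos ⟨hj1, hj2⟩]
  have h := hc_rel R q r (HCRel.commTC (⟨i - 1, by omega⟩ : Fin (r - 1)) (⟨j - 1, by omega⟩ : Fin r)
    (show j - 1 ≠ i - 1 by omega) (show j - 1 ≠ (i - 1) + 1 by omega))
  rw [map_mul, map_mul] at h
  exact h

lemma Tn_cn_lo {i : ℕ} (hi1 : 1 ≤ i) (hi2 : i ≤ r - 1) :
    Tn R q r i * cn R q r i = cn R q r (i + 1) * Tn R q r i := by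
  rw [Tn, cn, cn, dif_pos ⟨hi1, hi2⟩, dif_pos ⟨hi1, by omega⟩,
    dif_pos ⟨by omega, show i + 1 ≤ r by omega⟩]
  have h := hc_rel R q r (HCRel.TClo (R := R) (q := q) (⟨i - 1, by omega⟩ : Fin (r - 1)))
  rw [map_mul, map_mul] at h
  have e1 : loIdx (⟨i - 1, by omega⟩ : Fin (r - 1)) = (⟨i - 1, by omega⟩ : Fin r) := rfl
  have e2 : hiIdx (⟨i - 1, by omega⟩ : Fin (r - 1)) = (⟨i + 1 - 1, by omega⟩ : Fin r) :=
    Fin.ext (by simp [hiIdx]; omega)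
  rw [e1, e2] at h
  exact h

lemma Tn_cn_hi {i : ℕ} (hi1 : 1 ≤ i) (hi2 : i ≤ r - 1) :
    Tn R q r i * cn R q r (i + 1)
      = cn R q r i * Tn R q r i
        - algebraMap R (HC R q r) (q - 1) * (cn R q r i - cn R q r (i + 1)) := by
  rw [Tn, cn, cn, dif_pos ⟨hi1, hi2⟩, dif_pos ⟨by omega, show i + 1 ≤ r by omega⟩,
    dif_pos ⟨hi1, by omega⟩]
  have h := hc_rel R q r (HCRel.TChi (R := R) (q := q) (⟨i - 1, by omega⟩ : Fin (r - 1)))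
  have e1 : loIdx (⟨i - 1, by omega⟩ : Fin (r - 1)) = (⟨i - 1, by omega⟩ : Fin r) := rfl
  have e2 : hiIdx (⟨i - 1, by omega⟩ : Fin (r - 1)) = (⟨i + 1 - 1, by omega⟩ : Fin r) :=
    Fin.ext (by simp [hiIdx]; omega)
  rw [e1, e2] at h
  simp only [map_mul, map_sub, map_one, AlgHom.commutes] at h
  simp only [TT, CC, map_sub, map_one]
  exact h

lemma Tn_Tn_comm {i i' : ℕ} (hi1 : 1 ≤ i) (hi2 : i ≤ r - 1) (hi1' : 1 ≤ i') (hi2' : i' ≤ r - 1)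
    (h : i + 1 < i') : Commute (Tn R q r i) (Tn R q r i') := by
  rw [Commute, SemiconjBy, Tn, Tn, dif_pos ⟨hi1, hi2⟩, dif_pos ⟨hi1', hi2'⟩]
  have h := hc_rel R q r (HCRel.commTT (⟨i - 1, by omega⟩ : Fin (r - 1))
    (⟨i' - 1, by omega⟩ : Fin (r - 1)) (show (i - 1) + 1 < i' - 1 by omega))
  rw [map_mul, map_mul] at h
  exact h

lemma Tdown_nil {a b : ℕ} (h : a < b) : Tdown R q r a b = 1 := by
  rw [Tdown, show a + 1 - b = 0 by omega]
  simp

lemma Tdown_cons {a b : ℕ} (h0 : 1 ≤ b) (h : b ≤ a) :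
    Tdown R q r a b = Tn R q r a * Tdown R q r (a - 1) b := by
  rw [Tdown, Tdown, show a + 1 - b = (a - b) + 1 by omega, show a - 1 + 1 - b = a - b by omega,
    List.range'_concat]
  simp only [List.reverse_append, List.reverse_cons, List.reverse_nil, List.nil_append,
    List.map_cons, List.prod_cons, List.map_append, List.map_nil, List.singleton_append]
  rw [show b + 1 * (a - b) = a by omega]

lemma Tdown_snoc {a b : ℕ} (h : b ≤ a) :
    Tdown R q r a b = Tdown R q r a (b + 1) * Tn R q r b := by
  rw [Tdown, Tdown, show a + 1 - b = (a - b) + 1 by omega, show a + 1 - (b + 1) = a - b by omega,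
    List.range'_succ]
  simp

lemma commute_Tdown {x : HC R q r} {a b : ℕ}
    (h : ∀ i, b ≤ i → i ≤ a → Commute x (Tn R q r i)) :
    Commute x (Tdown R q r a b) := by
  apply Commute.list_prod_right
  intro y hy
  simp only [List.mem_map, List.mem_reverse, List.mem_range'_1] at hy
  obtain ⟨i, ⟨hi1, hi2⟩, rfl⟩ := hy
  exact h i hi1 (by omega)

lemma main_lemma (k : ℕ) (hk1 : 1 ≤ k) (hk2 : k ≤ r - 1) :
    ∀ a, k - 1 ≤ a → a ≤ r - 1 →
      (∀ l, 1 ≤ l → l ≤ r → (l ≤ k - 1 ∨ a + 2 ≤ l) →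
        Tdown R q r a k * cn R q r l = cn R q r l * Tdown R q r a k) ∧
      (Tdown R q r a k * cn R q r k = cn R q r (a + 1) * Tdown R q r a k) ∧
      (∀ l, k + 1 ≤ l → l ≤ a + 1 →
        Tdown R q r a k * cn R q r l
          = cn R q r (l - 1) * Tdown R q r a k
            - algebraMap R (HC R q r) (q - 1) *
                (Tdown R q r (l - 2) k * (cn R q r k - cn R q r (a + 1)) * Tdown R q r a l)) := by
  intro a ha
  induction a, ha using Nat.le_induction with
  | base =>
    intro _
    have hT : Tdown R q r (k - 1) k = 1 := Tdown_nil R q r (by omega)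
    refine ⟨fun l _ _ _ => by rw [hT, one_mul, mul_one], ?_, fun l h1 h2 => absurd h2 (by omega)⟩
    rw [hT, show k - 1 + 1 = k by omega, one_mul, mul_one]
  | succ a ha IH =>
    intro hup
    obtain ⟨IH1, IH2, IH3⟩ := IH (by omega)
    have hcons : Tdown R q r (a + 1) k = Tn R q r (a + 1) * Tdown R q r a k := by
      rw [Tdown_cons R q r (by omega) (show k ≤ a + 1 by omega), Nat.add_sub_cancel]
    refine ⟨?_, ?_, ?_⟩
    · intro l hl1 hl2 hl3
      have c1 := IH1 l hl1 hl2 (by omega)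
      have c2 : Tn R q r (a + 1) * cn R q r l = cn R q r l * Tn R q r (a + 1) :=
        Tn_cn_comm R q r (by omega) hup hl1 hl2 (by omega) (by omega)
      rw [hcons, mul_assoc, c1, ← mul_assoc, c2, mul_assoc]
    · have c2 := Tn_cn_lo R q r (i := a + 1) (by omega) hup
      rw [hcons, mul_assoc, IH2, ← mul_assoc, c2, mul_assoc]
    · intro l hl1 hl2
      rcases Nat.lt_or_ge l (a + 2) with hcase | hcase
      · -- case l ≤ a + 1
        have h3 := IH3 l hl1 (by omega)
        have e1 : Tn R q r (a + 1) * cn R q r (l - 1) = cn R q r (l - 1) * Tn R q r (a + 1) :=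
          Tn_cn_comm R q r (by omega) hup (by omega) (by omega) (by omega) (by omega)
        have e2 : Commute (Tn R q r (a + 1)) (Tdown R q r (l - 2) k) :=
          commute_Tdown R q r (fun i hi1 hi2 =>
            (Tn_Tn_comm R q r (by omega) (by omega) (by omega) hup (by omega)).symm)
        have e3 : Tn R q r (a + 1) * cn R q r k = cn R q r k * Tn R q r (a + 1) :=
          Tn_cn_comm R q r (by omega) hup (by omega) (by omega) (by omega) (by omega)
        have e4 := Tn_cn_lo R q r (i := a + 1) (by omega) hup
        have e5 : Tn R q r (a + 1) * Tdown R q r a l = Tdown R q r (a + 1) l := by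
          rw [Tdown_cons R q r (by omega) (show l ≤ a + 1 by omega), Nat.add_sub_cancel]
        have eY : Tn R q r (a + 1) * (cn R q r k - cn R q r (a + 1))
            = (cn R q r k - cn R q r (a + 1 + 1)) * Tn R q r (a + 1) := by
          rw [mul_sub, sub_mul, e3, e4]
        calc Tdown R q r (a + 1) k * cn R q r l
            = Tn R q r (a + 1) * (Tdown R q r a k * cn R q r l) := by rw [hcons, mul_assoc]
          _ = Tn R q r (a + 1) * (cn R q r (l - 1) * Tdown R q r a k)
              - Tn R q r (a + 1) * (algebraMap R (HC R q r) (q - 1) *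
                (Tdown R q r (l - 2) k * (cn R q r k - cn R q r (a + 1)) * Tdown R q r a l)) := by
              rw [h3, mul_sub]
          _ = cn R q r (l - 1) * Tdown R q r (a + 1) k
              - algebraMap R (HC R q r) (q - 1) *
                (Tdown R q r (l - 2) k * (cn R q r k - cn R q r (a + 1 + 1)) *
                  Tdown R q r (a + 1) l) := by
              congr 1
              · rw [← mul_assoc, e1, mul_assoc, hcons]
              · rw [Algebra.left_comm]
                congr 1
                rw [← mul_assoc, ← mul_assoc, e2.eq, mul_assoc (Tdown R q r (l - 2) k), eY,
                  ← mul_assoc,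
                  mul_assoc (Tdown R q r (l - 2) k * (cn R q r k - cn R q r (a + 1 + 1))), e5]
      · -- case l = a + 2
        have hl : l = a + 2 := by omega
        subst hl
        have c1 : Tdown R q r a k * cn R q r (a + 2) = cn R q r (a + 2) * Tdown R q r a k :=
          IH1 (a + 2) (by omega) (by omega) (Or.inr le_rfl)
        have c2 := Tn_cn_hi R q r (i := a + 1) (by omega) hup
        have hz : Tdown R q r (a + 1) (a + 2) = 1 := Tdown_nil R q r (by omega)
        have key : (cn R q r (a + 1) - cn R q r (a + 1 + 1)) * Tdown R q r a k
            = Tdown R q r a k * (cn R q r k - cn R q r (a + 1 + 1)) := by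
          rw [sub_mul, mul_sub, IH2]
          congr 1
          exact (IH1 (a + 1 + 1) (by omega) (by omega) (Or.inr (by omega))).symm
        rw [show a + 2 - 1 = a + 1 by omega, show a + 2 - 2 = a by omega, hz, mul_one]
        calc Tdown R q r (a + 1) k * cn R q r (a + 2)
            = Tn R q r (a + 1) * (Tdown R q r a k * cn R q r (a + 2)) := by rw [hcons, mul_assoc]
          _ = Tn R q r (a + 1) * cn R q r (a + 1 + 1) * Tdown R q r a k := by
              rw [c1, ← mul_assoc, show a + 2 = a + 1 + 1 by omega]
          _ = (cn R q r (a + 1) * Tn R q r (a + 1)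
              - algebraMap R (HC R q r) (q - 1) * (cn R q r (a + 1) - cn R q r (a + 1 + 1))) *
                Tdown R q r a k := by rw [c2]
          _ = cn R q r (a + 1) * Tdown R q r (a + 1) k
              - algebraMap R (HC R q r) (q - 1) *
                (Tdown R q r a k * (cn R q r k - cn R q r (a + 1 + 1))) := by
              rw [sub_mul, hcons, mul_assoc, mul_assoc, key]

end

end HCPaper

open HCPaper in
/-- The commutation formulas for `T_{r-1} ⋯ T_k` past the Clifford generators `c_l`. -/
theorem stmt5 (R : Type) [CommRing R] (h2 : ringChar R ≠ 2) (q : R) (r k l : ℕ)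
    (hk1 : 1 ≤ k) (hk2 : k ≤ r - 1) (hl1 : 1 ≤ l) (hl2 : l ≤ r) :
    (l ≤ k - 1 →
      Tdown R q r (r - 1) k * cn R q r l = cn R q r l * Tdown R q r (r - 1) k) ∧
    (Tdown R q r (r - 1) k * cn R q r k = cn R q r r * Tdown R q r (r - 1) k) ∧
    (k + 1 ≤ l →
      Tdown R q r (r - 1) k * cn R q r l
        = cn R q r (l - 1) * Tdown R q r (r - 1) k
          - algebraMap R (HC R q r) (q - 1) *
              (Tdown R q r (l - 2) k * (cn R q r k - cn R q r r) * Tdown R q r (r - 1) l)) := by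
  obtain ⟨H1, H2, H3⟩ := main_lemma R q r k hk1 hk2 (r - 1) (by omega) le_rfl
  have hr : r - 1 + 1 = r := by omega
  refine ⟨fun h => H1 l hl1 hl2 (Or.inl h), ?_, fun h => ?_⟩
  · have := H2; rwa [hr] at this
  · have := H3 l h (by omega); rwa [hr] at this
end

section
/- In the Hecke algebra H_{r,R}, for compositions λ, μ of r and d ∈ D_{λ,μ}, one has x_λ T_d = (Σ_{u' ∈ D^{-1}_{ν(d^{-1})} ∩ S_λ} T_{u'}) · T_d · x_{ν(d)}, where x_ν = Σ_{w ∈ S_ν} T_w and S_{ν(d)} = d^{-1} S_λ d ∩ S_μ, S_{ν(d^{-1})} = d S_μ d^{-1} ∩ S_λ. -/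
namespace HCPaper

/-- The Coxeter length of a permutation of `Fin r`: its number of inversions. -/
def len {r : ℕ} (w : Equiv.Perm (Fin r)) : ℕ :=
  (Finset.univ.filter fun p : Fin r × Fin r => p.1 < p.2 ∧ w p.2 < w p.1).card

/-- The simple transposition `s_{k+1} = (k+1, k+2)` (0-based `k < r-1`) as a permutation. -/
def simpleT {r : ℕ} (k : Fin (r - 1)) : Equiv.Perm (Fin r) :=
  Equiv.swap (loIdx k) (hiIdx k)

/-- Partial sum `λ_1 + ⋯ + λ_k` of a composition. -/
def psum {n : ℕ} (lam : Fin n → ℕ) (k : ℕ) : ℕ :=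
  ∑ i : Fin n, if (i : ℕ) < k then lam i else 0

/-- `j` (0-based) lies in the `k`-th block `R^λ_{k+1}` of the composition `λ`. -/
def InBlock {n r : ℕ} (lam : Fin n → ℕ) (k : Fin n) (j : Fin r) : Prop :=
  psum lam (k : ℕ) ≤ (j : ℕ) ∧ (j : ℕ) < psum lam (k : ℕ) + lam k

instance {n r : ℕ} (lam : Fin n → ℕ) (k : Fin n) (j : Fin r) : Decidable (InBlock lam k j) := by
  unfold InBlock; infer_instance

/-- Membership in the Young subgroup `S_λ`: `w` preserves each block of `λ`. -/
def MemYoung {n r : ℕ} (lam : Fin n → ℕ) (w : Equiv.Perm (Fin r)) : Prop :=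
  ∀ (k : Fin n) (j : Fin r), InBlock lam k j → InBlock lam k (w j)

instance {n r : ℕ} (lam : Fin n → ℕ) (w : Equiv.Perm (Fin r)) : Decidable (MemYoung lam w) := by
  unfold MemYoung; infer_instance

/-- `d` is the minimal length element of the double coset `S_λ d S_μ`. -/
def MinDouble {r n1 n2 : ℕ} (lam : Fin n1 → ℕ) (mu : Fin n2 → ℕ) (d : Equiv.Perm (Fin r)) :
    Prop :=
  ∀ u σ : Equiv.Perm (Fin r), MemYoung lam u → MemYoung mu σ → len d ≤ len (u * d * σ)

end HCPaper
namespace HCPaper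

noncomputable section

/-- The defining relations of the Iwahori-Hecke algebra `H_{r,R}` of type `A_{r-1}`. -/
inductive HkRel (R : Type) [CommRing R] (q : R) (r : ℕ) :
    FreeAlgebra R (Fin (r - 1)) → FreeAlgebra R (Fin (r - 1)) → Prop
  | quad (i : Fin (r - 1)) :
      HkRel R q r ((FreeAlgebra.ι R i - algebraMap R _ q) * (FreeAlgebra.ι R i + 1)) 0
  | commTT (i i' : Fin (r - 1)) (h : i.val + 1 < i'.val) :
      HkRel R q r (FreeAlgebra.ι R i * FreeAlgebra.ι R i')
        (FreeAlgebra.ι R i' * FreeAlgebra.ι R i)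
  | braid (i i' : Fin (r - 1)) (h : i'.val = i.val + 1) :
      HkRel R q r (FreeAlgebra.ι R i * FreeAlgebra.ι R i' * FreeAlgebra.ι R i)
        (FreeAlgebra.ι R i' * FreeAlgebra.ι R i * FreeAlgebra.ι R i')

/-- The Iwahori-Hecke algebra `H_{r,R}` with parameter `q`. -/
abbrev Hk (R : Type) [CommRing R] (q : R) (r : ℕ) := RingQuot (HkRel R q r)

/-- The generator `T_{i+1}` of `H_{r,R}` (0-based index). -/
def TH (R : Type) [CommRing R] (q : R) (r : ℕ) (i : Fin (r - 1)) : Hk R q r :=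
  RingQuot.mkAlgHom R (HkRel R q r) (FreeAlgebra.ι R i)

/-- `TW` is the standard basis `w ↦ T_w` of `H_{r,R}`. -/
def IsTWH {R : Type} [CommRing R] (q : R) (r : ℕ) (TW : Equiv.Perm (Fin r) → Hk R q r) :
    Prop :=
  TW 1 = 1 ∧ ∀ (w : Equiv.Perm (Fin r)) (k : Fin (r - 1)),
    len (w * simpleT k) = len w + 1 → TW (w * simpleT k) = TW w * TH R q r k

/-- The generator `T_i` of `H_{r,R}` with 1-based index. -/
def THn (R : Type) [CommRing R] (q : R) (r : ℕ) (i : ℕ) : Hk R q r :=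
  if h : 1 ≤ i ∧ i ≤ r - 1 then TH R q r ⟨i - 1, by omega⟩ else 1

/-- The descending product `T_a T_{a-1} ⋯ T_b` in `H_{r,R}` (1-based); `1` if `b > a`. -/
def TdownH (R : Type) [CommRing R] (q : R) (r : ℕ) (a b : ℕ) : Hk R q r :=
  (((List.range' b (a + 1 - b)).reverse).map (THn R q r)).prod

/-- The element `x_λ = ∑_{w ∈ S_λ} T_w` of `H_{r,R}`. -/
def xEltH {R : Type} [CommRing R] {q : R} {r n : ℕ} (lam : Fin n → ℕ)
    (TW : Equiv.Perm (Fin r) → Hk R q r) : Hk R q r :=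
  ∑ w : Equiv.Perm (Fin r), if MemYoung lam w then TW w else 0

end

end HCPaper

namespace HCPaper

section Aux

open Finset

variable {r : ℕ}

/-- The set of inversions of a permutation. -/
def invSet (w : Equiv.Perm (Fin r)) : Finset (Fin r × Fin r) :=
  Finset.univ.filter fun p : Fin r × Fin r => p.1 < p.2 ∧ w p.2 < w p.1

lemma perm_apply_inv_self (f : Equiv.Perm (Fin r)) (x : Fin r) : f (f⁻¹ x) = x :=
  (Equiv.eq_symm_apply f).mp rfl

lemma perm_inv_apply_self (f : Equiv.Perm (Fin r)) (x : Fin r) : f⁻¹ (f x) = x :=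
  Equiv.Perm.inv_eq_iff_eq.mpr rfl

lemma len_eq (w : Equiv.Perm (Fin r)) : len w = (invSet w).card := rfl

lemma mem_invSet {w : Equiv.Perm (Fin r)} {p : Fin r × Fin r} :
    p ∈ invSet w ↔ p.1 < p.2 ∧ w p.2 < w p.1 := by
  simp [invSet]

lemma len_inv (w : Equiv.Perm (Fin r)) : len w⁻¹ = len w := by
  classical
  rw [len_eq, len_eq]
  apply Finset.card_bij' (fun p _ => (w⁻¹ p.2, w⁻¹ p.1)) (fun p _ => (w p.2, w p.1))
  · intro p hp
    rw [mem_invSet] at hp ⊢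
    simp only [perm_apply_inv_self]
    exact ⟨hp.2, hp.1⟩
  · intro p hp
    rw [mem_invSet] at hp ⊢
    simp only [perm_inv_apply_self]
    exact ⟨hp.2, hp.1⟩
  · intro p hp; simp
  · intro p hp; simp

lemma loIdx_lt_hiIdx (k : Fin (r - 1)) : loIdx k < hiIdx k := by
  simp [loIdx, hiIdx, Fin.lt_def]

lemma simpleT_apply_lo (k : Fin (r - 1)) : simpleT k (loIdx k) = hiIdx k := by
  simp [simpleT]

lemma simpleT_apply_hi (k : Fin (r - 1)) : simpleT k (hiIdx k) = loIdx k := by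
  simp [simpleT]

lemma simpleT_apply_of_ne {k : Fin (r - 1)} {j : Fin r} (h1 : j ≠ loIdx k)
    (h2 : j ≠ hiIdx k) : simpleT k j = j :=
  Equiv.swap_apply_of_ne_of_ne h1 h2

lemma simpleT_mul_self (k : Fin (r - 1)) : simpleT k * simpleT k = 1 :=
  Equiv.swap_mul_self _ _

/-- The swap keeps strict order of pairs other than `(loIdx k, hiIdx k)`. -/
lemma simpleT_lt_of_lt {k : Fin (r - 1)} {i j : Fin r} (hij : i < j)
    (hne : ¬(i = loIdx k ∧ j = hiIdx k)) : simpleT k i < simpleT k j := by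
  have hv : (loIdx k : Fin r).val + 1 = (hiIdx k : Fin r).val := rfl
  by_cases hi1 : i = loIdx k
  · subst hi1
    have hj : j ≠ hiIdx k := fun h => hne ⟨rfl, h⟩
    have hj2 : j ≠ loIdx k := fun h => absurd (h ▸ hij) (lt_irrefl _)
    rw [simpleT_apply_lo, simpleT_apply_of_ne hj2 hj]
    have := Fin.lt_def.mp hij
    have hjv : j.val ≠ (hiIdx k).val := fun h => hj (Fin.ext h)
    exact Fin.lt_def.mpr (by omega)
  · by_cases hi2 : i = hiIdx k
    · subst hi2
      have hj1 : j ≠ loIdx k := by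
        intro h; subst h
        exact absurd (loIdx_lt_hiIdx k) (not_lt.mpr (le_of_lt hij))
      have hj2 : j ≠ hiIdx k := fun h => absurd (h ▸ hij) (lt_irrefl _)
      rw [simpleT_apply_hi, simpleT_apply_of_ne hj1 hj2]
      exact lt_trans (loIdx_lt_hiIdx k) hij
    · rw [simpleT_apply_of_ne hi1 hi2]
      by_cases hj1 : j = loIdx k
      · subst hj1
        rw [simpleT_apply_lo]
        exact lt_trans hij (loIdx_lt_hiIdx k)
      · by_cases hj2 : j = hiIdx k
        · subst hj2
          rw [simpleT_apply_hi]
          have := Fin.lt_def.mp hij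
          have hiv : i.val ≠ (loIdx k).val := fun h => hi1 (Fin.ext h)
          exact Fin.lt_def.mpr (by have : i.val < (loIdx k).val + 1 := by omega
                                   omega)
        · rw [simpleT_apply_of_ne hj1 hj2]
          exact hij

/-- Central counting lemma: multiplying by a simple transposition toggles the
inversion at `(loIdx k, hiIdx k)` and permutes the others. -/
lemma len_mul_simpleT_cases (w : Equiv.Perm (Fin r)) (k : Fin (r - 1)) :
    (w (loIdx k) < w (hiIdx k) ∧ len (w * simpleT k) = len w + 1) ∨
    (w (hiIdx k) < w (loIdx k) ∧ len w = len (w * simpleT k) + 1) := by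
  classical
  set a : Fin r := loIdx k with ha
  set b : Fin r := hiIdx k with hb
  have hab : a < b := loIdx_lt_hiIdx k
  -- the bijection on the erased inversion sets
  have hcard : ((invSet (w * simpleT k)).erase (a, b)).card
      = ((invSet w).erase (a, b)).card := by
    apply Finset.card_bij' (fun p _ => (simpleT k p.1, simpleT k p.2))
      (fun p _ => (simpleT k p.1, simpleT k p.2))
    · intro p hp
      rcases Finset.mem_erase.mp hp with ⟨hpne, hpinv⟩
      rw [mem_invSet] at hpinv
      obtain ⟨hlt, hinv⟩ := hpinv
      have hne : ¬(p.1 = a ∧ p.2 = b) := by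
        intro h; exact hpne (Prod.ext h.1 h.2)
      have hlt' : simpleT k p.1 < simpleT k p.2 := simpleT_lt_of_lt hlt hne
      refine Finset.mem_erase.mpr ⟨?_, ?_⟩
      · intro hcontra
        have h1 : simpleT k p.1 = a := congrArg Prod.fst hcontra
        have h2 : simpleT k p.2 = b := congrArg Prod.snd hcontra
        have e1 : p.1 = b := by
          have := congrArg (simpleT k) h1
          rwa [← Equiv.Perm.mul_apply, simpleT_mul_self, Equiv.Perm.one_apply,
            simpleT_apply_lo] at this
        have e2 : p.2 = a := by
          have := congrArg (simpleT k) h2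
          rwa [← Equiv.Perm.mul_apply, simpleT_mul_self, Equiv.Perm.one_apply,
            simpleT_apply_hi] at this
        rw [e1, e2] at hlt
        exact absurd (lt_trans hab hlt) (lt_irrefl _)
      · rw [mem_invSet]
        refine ⟨hlt', ?_⟩
        simpa [Equiv.Perm.mul_apply] using hinv
    · intro p hp
      rcases Finset.mem_erase.mp hp with ⟨hpne, hpinv⟩
      rw [mem_invSet] at hpinv
      obtain ⟨hlt, hinv⟩ := hpinv
      have hne : ¬(p.1 = a ∧ p.2 = b) := by
        intro h; exact hpne (Prod.ext h.1 h.2)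
      have hlt' : simpleT k p.1 < simpleT k p.2 := simpleT_lt_of_lt hlt hne
      refine Finset.mem_erase.mpr ⟨?_, ?_⟩
      · intro hcontra
        have h1 : simpleT k p.1 = a := congrArg Prod.fst hcontra
        have h2 : simpleT k p.2 = b := congrArg Prod.snd hcontra
        have e1 : p.1 = b := by
          have := congrArg (simpleT k) h1
          rwa [← Equiv.Perm.mul_apply, simpleT_mul_self, Equiv.Perm.one_apply,
            simpleT_apply_lo] at this
        have e2 : p.2 = a := by
          have := congrArg (simpleT k) h2
          rwa [← Equiv.Perm.mul_apply, simpleT_mul_self, Equiv.Perm.one_apply,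
            simpleT_apply_hi] at this
        rw [e1, e2] at hlt
        exact absurd (lt_trans hab hlt) (lt_irrefl _)
      · rw [mem_invSet]
        refine ⟨hlt', ?_⟩
        have hss : ∀ x, simpleT k (simpleT k x) = x := fun x => by
          rw [← Equiv.Perm.mul_apply, simpleT_mul_self, Equiv.Perm.one_apply]
        simp only [Equiv.Perm.mul_apply, hss]
        exact hinv
    · intro p hp
      simp only [← Equiv.Perm.mul_apply, simpleT_mul_self, Equiv.Perm.one_apply]
    · intro p hp
      simp only [← Equiv.Perm.mul_apply, simpleT_mul_self, Equiv.Perm.one_apply]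
  have hsplit : ∀ (v : Equiv.Perm (Fin r)),
      (invSet v).card = ((invSet v).erase (a, b)).card
        + (if (a, b) ∈ invSet v then 1 else 0) := by
    intro v
    by_cases h : (a, b) ∈ invSet v
    · rw [if_pos h, Finset.card_erase_of_mem h]
      have : 1 ≤ (invSet v).card := Finset.card_pos.mpr ⟨_, h⟩
      omega
    · rw [if_neg h, Finset.erase_eq_of_notMem h]; omega
  have hmem1 : (a, b) ∈ invSet (w * simpleT k) ↔ w a < w b := by
    rw [mem_invSet]
    simp only [Equiv.Perm.mul_apply]
    rw [show simpleT k a = b from simpleT_apply_lo k,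
      show simpleT k b = a from simpleT_apply_hi k]
    exact ⟨fun h => h.2, fun h => ⟨hab, h⟩⟩
  have hmem2 : (a, b) ∈ invSet w ↔ w b < w a := by
    rw [mem_invSet]
    exact ⟨fun h => h.2, fun h => ⟨hab, h⟩⟩
  have hwab : w a ≠ w b := fun h => absurd (w.injective h) (ne_of_lt hab)
  rcases lt_or_gt_of_ne hwab with h | h
  · left
    refine ⟨h, ?_⟩
    rw [len_eq, len_eq, hsplit (w * simpleT k), hsplit w, hcard, if_pos (hmem1.mpr h),
      if_neg (fun hc => absurd (hmem2.mp hc) (not_lt.mpr (le_of_lt h)))]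
  · right
    refine ⟨h, ?_⟩
    rw [len_eq, len_eq, hsplit w, hsplit (w * simpleT k), hcard, if_neg
      (fun hc => absurd (hmem1.mp hc) (not_lt.mpr (le_of_lt h))),
      if_pos (hmem2.mpr h)]

lemma len_mul_simpleT_of_lt {w : Equiv.Perm (Fin r)} {k : Fin (r - 1)}
    (h : w (loIdx k) < w (hiIdx k)) : len (w * simpleT k) = len w + 1 := by
  rcases len_mul_simpleT_cases w k with ⟨_, h2⟩ | ⟨h1, _⟩
  · exact h2
  · exact absurd (lt_trans h h1) (lt_irrefl _)

lemma len_mul_simpleT_of_gt {w : Equiv.Perm (Fin r)} {k : Fin (r - 1)}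
    (h : w (hiIdx k) < w (loIdx k)) : len w = len (w * simpleT k) + 1 := by
  rcases len_mul_simpleT_cases w k with ⟨h1, _⟩ | ⟨_, h2⟩
  · exact absurd (lt_trans h h1) (lt_irrefl _)
  · exact h2

section ConvRel

variable {r : ℕ} (B : Fin r → Fin r → Prop)

/-- `u` is increasing on each class of `B`. -/
def IncOn (u : Equiv.Perm (Fin r)) : Prop := ∀ i j : Fin r, i < j → B i j → u i < u j

/-- Membership in the subgroup of permutations preserving classes of `B`. -/
def MemSB (τ : Equiv.Perm (Fin r)) : Prop := ∀ j : Fin r, B j (τ j)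

variable {B}

lemma memSB_one (hrefl : ∀ i, B i i) : MemSB B 1 := fun j => hrefl j

lemma memSB_mul (htrans : ∀ i j l, B i j → B j l → B i l)
    {σ τ : Equiv.Perm (Fin r)} (hσ : MemSB B σ) (hτ : MemSB B τ) : MemSB B (σ * τ) :=
  fun j => htrans _ _ _ (hτ j) (hσ (τ j))

lemma memSB_inv (hsymm : ∀ i j, B i j → B j i)
    {τ : Equiv.Perm (Fin r)} (hτ : MemSB B τ) : MemSB B τ⁻¹ := by
  intro j
  have := hτ (τ⁻¹ j)
  rw [perm_apply_inv_self] at this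
  exact hsymm _ _ this

/-- If `u` is not increasing on classes, it has an adjacent descent within a class. -/
lemma exists_descent (hsymm : ∀ i j, B i j → B j i)
    (htrans : ∀ i j l, B i j → B j l → B i l)
    (hconv : ∀ i j l : Fin r, i ≤ j → j ≤ l → B i l → B i j)
    {u : Equiv.Perm (Fin r)} (h : ¬ IncOn B u) :
    ∃ k : Fin (r - 1), B (loIdx k) (hiIdx k) ∧ u (hiIdx k) < u (loIdx k) := by
  simp only [IncOn, not_forall] at h
  obtain ⟨i, j, hij, hBij, hnlt⟩ := h
  have hgt : u j < u i := by
    rcases lt_trichotomy (u i) (u j) with h1 | h1 | h1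
    · exact absurd h1 hnlt
    · exact absurd (u.injective h1) (ne_of_lt hij)
    · exact h1
  clear hnlt
  -- induction on the gap
  have main : ∀ m : ℕ, ∀ i j : Fin r, j.val - i.val ≤ m → i < j → B i j → u j < u i →
      ∃ k : Fin (r - 1), B (loIdx k) (hiIdx k) ∧ u (hiIdx k) < u (loIdx k) := by
    intro m
    induction m with
    | zero => intro i j hm hij _ _; exact absurd hm (by have := Fin.lt_def.mp hij; omega)
    | succ m ih =>
      intro i j hm hij hB hgt
      have hijv := Fin.lt_def.mp hij
      by_cases hadj : j.val = i.val + 1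
      · have hk : i.val < r - 1 := by have := j.isLt; omega
        refine ⟨⟨i.val, hk⟩, ?_, ?_⟩
        · have e1 : loIdx ⟨i.val, hk⟩ = i := Fin.ext rfl
          have e2 : hiIdx ⟨i.val, hk⟩ = j := Fin.ext (by simp [hiIdx, hadj])
          rw [e1, e2]; exact hB
        · have e1 : loIdx ⟨i.val, hk⟩ = i := Fin.ext rfl
          have e2 : hiIdx ⟨i.val, hk⟩ = j := Fin.ext (by simp [hiIdx, hadj])
          rw [e1, e2]; exact hgt
      · have hmid : i.val + 1 < r := by have := j.isLt; omega
        set x : Fin r := ⟨i.val + 1, hmid⟩ with hx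
        have hix : i < x := Fin.lt_def.mpr (by simp [hx])
        have hxj : x < j := Fin.lt_def.mpr (by simp [hx]; omega)
        have hBix : B i x := hconv i x j (le_of_lt hix) (le_of_lt hxj) hB
        have hBxj : B x j := htrans _ _ _ (hsymm _ _ hBix) hB
        have hux : u x ≠ u i := fun h => absurd (u.injective h) (ne_of_lt hix).symm
        rcases lt_or_gt_of_ne hux with h1 | h1
        · exact ih i x (by simp [hx]; omega) hix hBix h1
        · exact ih x j (by simp [hx]; omega) hxj hBxj (lt_trans hgt h1)
  exact main (j.val - i.val) i j le_rfl hij hBij hgt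

lemma simpleT_memSB (hrefl : ∀ i, B i i) (hsymm : ∀ i j, B i j → B j i)
    {k : Fin (r - 1)} (h : B (loIdx k) (hiIdx k)) : MemSB B (simpleT k) := by
  intro j
  by_cases h1 : j = loIdx k
  · subst h1; rw [simpleT_apply_lo]; exact h
  · by_cases h2 : j = hiIdx k
    · subst h2; rw [simpleT_apply_hi]; exact hsymm _ _ h
    · rw [simpleT_apply_of_ne h1 h2]; exact hrefl j

/-- If the classes of `B` are convex then a class-preserving permutation has no
inversions across distinct classes. -/
lemma crossNotInv (hsymm : ∀ i j, B i j → B j i)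
    (htrans : ∀ i j l, B i j → B j l → B i l)
    (hconv : ∀ i j l : Fin r, i ≤ j → j ≤ l → B i l → B i j)
    {τ : Equiv.Perm (Fin r)} (hτ : MemSB B τ) (i j : Fin r) (hij : i < j)
    (hB : ¬ B i j) : τ i < τ j := by
  rcases lt_trichotomy (τ i) (τ j) with h1 | h1 | h1
  · exact h1
  · exact absurd (τ.injective h1) (ne_of_lt hij)
  · exfalso
    rcases le_or_gt i (τ j) with h2 | h2
    · -- i ≤ τ j < τ i, B i (τ i) convex gives B i (τ j), then B i j
      have hBi : B i (τ i) := hτ i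
      have : B i (τ j) := hconv i (τ j) (τ i) h2 (le_of_lt h1) hBi
      exact hB (htrans _ _ _ this (hsymm _ _ (hτ j)))
    · -- τ j < i < j with B (τ j) j
      have hBj : B (τ j) j := hsymm _ _ (hτ j)
      have : B (τ j) i := hconv (τ j) i j (le_of_lt h2) (le_of_lt hij) hBj
      exact hB (htrans _ _ _ (hsymm _ _ this) hBj)

/-- Length additivity: if `u` is increasing on classes and `τ` preserves classes, then
`len (u * τ) = len u + len τ`. -/
lemma lenAdd (hsymm : ∀ i j, B i j → B j i)
    (htrans : ∀ i j l, B i j → B j l → B i l)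
    (hconv : ∀ i j l : Fin r, i ≤ j → j ≤ l → B i l → B i j)
    {u τ : Equiv.Perm (Fin r)} (hu : IncOn B u) (hτ : MemSB B τ) :
    len (u * τ) = len u + len τ := by
  classical
  have hτinv : MemSB B τ⁻¹ := memSB_inv hsymm hτ
  -- same-class inversions of u*τ are exactly inversions of τ
  have hsame : (invSet (u * τ)).filter (fun p => B p.1 p.2) = invSet τ := by
    ext p
    simp only [Finset.mem_filter, mem_invSet, Equiv.Perm.mul_apply]
    constructor
    · rintro ⟨⟨hlt, hinv⟩, hB⟩
      refine ⟨hlt, ?_⟩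
      rcases lt_trichotomy (τ p.1) (τ p.2) with h1 | h1 | h1
      · have hBττ : B (τ p.1) (τ p.2) :=
          htrans _ _ _ (hsymm _ _ (hτ p.1)) (htrans _ _ _ hB (hτ p.2))
        exact absurd (hu _ _ h1 hBττ) (not_lt.mpr (le_of_lt hinv))
      · exact absurd (τ.injective h1) (ne_of_lt hlt)
      · exact h1
    · rintro ⟨hlt, hinv⟩
      have hB : B p.1 p.2 := by
        by_contra hnB
        exact absurd (crossNotInv hsymm htrans hconv hτ p.1 p.2 hlt hnB)
          (not_lt.mpr (le_of_lt hinv))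
      have hBττ : B (τ p.2) (τ p.1) :=
        htrans _ _ _ (hsymm _ _ (hτ p.2)) (htrans _ _ _ (hsymm _ _ hB) (hτ p.1))
      exact ⟨⟨hlt, hu _ _ hinv hBττ⟩, hB⟩
  -- all inversions of τ are same-class (needed implicitly above), and
  -- u has no same-class inversions
  have husame : (invSet u).filter (fun p => B p.1 p.2) = ∅ := by
    ext p
    simp only [Finset.mem_filter, mem_invSet, Finset.notMem_empty, iff_false]
    rintro ⟨⟨hlt, hinv⟩, hB⟩
    exact absurd (hu _ _ hlt hB) (not_lt.mpr (le_of_lt hinv))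
  -- cross-class inversions of u*τ biject with cross-class inversions of u
  have hcross : ((invSet (u * τ)).filter (fun p => ¬ B p.1 p.2)).card
      = ((invSet u).filter (fun p => ¬ B p.1 p.2)).card := by
    apply Finset.card_bij' (fun p _ => (τ p.1, τ p.2)) (fun p _ => (τ⁻¹ p.1, τ⁻¹ p.2))
    · intro p hp
      rcases Finset.mem_filter.mp hp with ⟨hpinv, hnB⟩
      rw [mem_invSet] at hpinv
      obtain ⟨hlt, hinv⟩ := hpinv
      have hlt' : τ p.1 < τ p.2 := crossNotInv hsymm htrans hconv hτ p.1 p.2 hlt hnB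
      refine Finset.mem_filter.mpr ⟨mem_invSet.mpr ⟨hlt', ?_⟩, ?_⟩
      · simpa [Equiv.Perm.mul_apply] using hinv
      · intro hBc
        exact hnB (htrans _ _ _ (hτ p.1) (htrans _ _ _ hBc (hsymm _ _ (hτ p.2))))
    · intro p hp
      rcases Finset.mem_filter.mp hp with ⟨hpinv, hnB⟩
      rw [mem_invSet] at hpinv
      obtain ⟨hlt, hinv⟩ := hpinv
      have hnB' : ¬ B (τ⁻¹ p.1) (τ⁻¹ p.2) := by
        intro hBc
        have h1 : B p.1 (τ⁻¹ p.1) := hτinv p.1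
        have h2 : B p.2 (τ⁻¹ p.2) := hτinv p.2
        exact hnB (htrans _ _ _ h1 (htrans _ _ _ hBc (hsymm _ _ h2)))
      have hlt' : τ⁻¹ p.1 < τ⁻¹ p.2 := crossNotInv hsymm htrans hconv hτinv p.1 p.2 hlt hnB
      refine Finset.mem_filter.mpr ⟨mem_invSet.mpr ⟨hlt', ?_⟩, hnB'⟩
      simp only [Equiv.Perm.mul_apply, perm_apply_inv_self]
      exact hinv
    · intro p hp; simp
    · intro p hp; simp
  have split1 : ((invSet (u * τ)).filter (fun p => B p.1 p.2)).card
      + ((invSet (u * τ)).filter (fun p => ¬ B p.1 p.2)).card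
      = (invSet (u * τ)).card :=
    Finset.card_filter_add_card_filter_not _
  have split2 : ((invSet u).filter (fun p => B p.1 p.2)).card
      + ((invSet u).filter (fun p => ¬ B p.1 p.2)).card
      = (invSet u).card :=
    Finset.card_filter_add_card_filter_not _
  rw [hsame] at split1
  rw [husame] at split2
  rw [len_eq (u * τ), len_eq u, len_eq τ]
  simp only [Finset.card_empty] at split2
  omega

/-- Factorization existence: every `w` factors as `u * τ` with `u` increasing on classes
and `τ` class-preserving. -/
lemma exists_factorization (hrefl : ∀ i, B i i) (hsymm : ∀ i j, B i j → B j i)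
    (htrans : ∀ i j l, B i j → B j l → B i l)
    (hconv : ∀ i j l : Fin r, i ≤ j → j ≤ l → B i l → B i j)
    (w : Equiv.Perm (Fin r)) :
    ∃ u τ : Equiv.Perm (Fin r), IncOn B u ∧ MemSB B τ ∧ w = u * τ := by
  have main : ∀ m : ℕ, ∀ w : Equiv.Perm (Fin r), len w ≤ m →
      ∃ u τ : Equiv.Perm (Fin r), IncOn B u ∧ MemSB B τ ∧ w = u * τ := by
    intro m
    induction m with
    | zero =>
      intro w hlen
      by_cases hinc : IncOn B w
      · exact ⟨w, 1, hinc, memSB_one hrefl, (mul_one w).symm⟩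
      · obtain ⟨k, hBk, hdesc⟩ := exists_descent hsymm htrans hconv hinc
        have := len_mul_simpleT_of_gt hdesc
        omega
    | succ m ih =>
      intro w hlen
      by_cases hinc : IncOn B w
      · exact ⟨w, 1, hinc, memSB_one hrefl, (mul_one w).symm⟩
      · obtain ⟨k, hBk, hdesc⟩ := exists_descent hsymm htrans hconv hinc
        have hlen' := len_mul_simpleT_of_gt hdesc
        obtain ⟨u, τ, hu, hτ, heq⟩ := ih (w * simpleT k) (by omega)
        refine ⟨u, τ * simpleT k, hu, memSB_mul htrans hτ
          (simpleT_memSB hrefl hsymm hBk), ?_⟩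
        have : w = (w * simpleT k) * simpleT k := by
          rw [mul_assoc, simpleT_mul_self, mul_one]
        rw [this, heq, mul_assoc]
  exact main (len w) w le_rfl

/-- A class-preserving permutation that is increasing on classes is the identity. -/
lemma eq_one_of_memSB_inc (hsymm : ∀ i j, B i j → B j i)
    {ρ : Equiv.Perm (Fin r)} (hρ : MemSB B ρ)
    (hinc : ∀ i j : Fin r, i < j → B i j → ρ i < ρ j) : ρ = 1 := by
  classical
  by_contra hne
  have hex : ∃ j : Fin r, ρ j ≠ j := by
    by_contra hall
    push_neg at hall
    exact hne (Equiv.ext fun j => hall j)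
  set S : Finset (Fin r) := Finset.univ.filter (fun j => ρ j ≠ j) with hS
  have hSne : S.Nonempty := by
    obtain ⟨j, hj⟩ := hex
    exact ⟨j, by simp [hS, hj]⟩
  set j := S.min' hSne with hj
  have hjS : j ∈ S := S.min'_mem hSne
  have hjne : ρ j ≠ j := (Finset.mem_filter.mp hjS).2
  have hmin : ∀ x : Fin r, x < j → ρ x = x := by
    intro x hx
    by_contra hc
    have : x ∈ S := by simp [hS, hc]
    exact absurd (S.min'_le x this) (not_le.mpr hx)
  set x := ρ⁻¹ j with hxdef
  have hρx : ρ x = j := perm_apply_inv_self ρ j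
  have hxj : j < x := by
    rcases lt_trichotomy x j with h1 | h1 | h1
    · exact absurd (hmin x h1 ▸ hρx) (ne_of_lt h1)
    · exact absurd (h1 ▸ hρx) hjne
    · exact h1
  have hBjx : B j x := hsymm _ _ (hρx ▸ hρ x)
  have hρj : ρ j < ρ x := hinc j x hxj hBjx
  rw [hρx] at hρj
  have : ρ (ρ j) = ρ j := hmin (ρ j) hρj
  exact hjne (ρ.injective this)

/-- Uniqueness of the factorization. -/
lemma factorization_unique (hsymm : ∀ i j, B i j → B j i)
    (htrans : ∀ i j l, B i j → B j l → B i l)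
    {u u' τ τ' : Equiv.Perm (Fin r)} (hu : IncOn B u) (hu' : IncOn B u')
    (hτ : MemSB B τ) (hτ' : MemSB B τ') (heq : u * τ = u' * τ') :
    u = u' ∧ τ = τ' := by
  set ρ := τ * τ'⁻¹ with hρdef
  have hρ : MemSB B ρ := memSB_mul htrans hτ (memSB_inv hsymm hτ')
  have huρ : u * ρ = u' := by
    have : u * τ * τ'⁻¹ = u' * τ' * τ'⁻¹ := by rw [heq]
    rwa [mul_assoc, mul_assoc, mul_inv_cancel, mul_one] at this
  have hinc : ∀ i j : Fin r, i < j → B i j → ρ i < ρ j := by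
    intro i j hij hB
    have h1 : u' i < u' j := hu' i j hij hB
    rw [← huρ] at h1
    simp only [Equiv.Perm.mul_apply] at h1
    have hBρ : B (ρ i) (ρ j) := htrans _ _ _ (hsymm _ _ (hρ i)) (htrans _ _ _ hB (hρ j))
    rcases lt_trichotomy (ρ i) (ρ j) with h2 | h2 | h2
    · exact h2
    · exact absurd (ρ.injective h2) (ne_of_lt hij)
    · exact absurd (hu _ _ h2 (hsymm _ _ hBρ)) (not_lt.mpr (le_of_lt h1))
  have hρ1 : ρ = 1 := eq_one_of_memSB_inc hsymm hρ hinc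
  constructor
  · rw [← huρ, hρ1, mul_one]
  · have : τ * τ'⁻¹ = 1 := hρ1
    calc τ = τ * τ'⁻¹ * τ' := by rw [mul_assoc, inv_mul_cancel, mul_one]
    _ = τ' := by rw [this, one_mul]

end ConvRel

section LenMul

variable {r : ℕ}

lemma eq_one_of_strictMono {w : Equiv.Perm (Fin r)}
    (h : ∀ i j : Fin r, i < j → w i < w j) : w = 1 :=
  eq_one_of_memSB_inc (B := fun _ _ => True) (fun _ _ _ => trivial)
    (fun _ => trivial) (fun i j hij _ => h i j hij)

lemma exists_descent_top {w : Equiv.Perm (Fin r)} (h : w ≠ 1) :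
    ∃ k : Fin (r - 1), w (hiIdx k) < w (loIdx k) := by
  by_cases hinc : IncOn (fun _ _ : Fin r => True) w
  · exact absurd (eq_one_of_strictMono fun i j hij => hinc i j hij trivial) h
  · obtain ⟨k, _, hk⟩ := exists_descent (B := fun _ _ => True)
      (fun _ _ _ => trivial) (fun _ _ _ _ _ => trivial)
      (fun _ _ _ _ _ _ => trivial) hinc
    exact ⟨k, hk⟩

lemma len_one : len (1 : Equiv.Perm (Fin r)) = 0 := by
  rw [len_eq]
  refine Finset.card_eq_zero.mpr ?_
  ext p
  simp only [mem_invSet, Finset.notMem_empty, iff_false, Equiv.Perm.one_apply]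
  rintro ⟨h1, h2⟩
  exact absurd (lt_trans h1 h2) (lt_irrefl _)

lemma len_mul_simpleT_le (w : Equiv.Perm (Fin r)) (k : Fin (r - 1)) :
    len (w * simpleT k) ≤ len w + 1 := by
  rcases len_mul_simpleT_cases w k with ⟨_, h⟩ | ⟨_, h⟩ <;> omega

lemma len_subadd (a b : Equiv.Perm (Fin r)) : len (a * b) ≤ len a + len b := by
  have main : ∀ m : ℕ, ∀ b : Equiv.Perm (Fin r), len b ≤ m →
      len (a * b) ≤ len a + len b := by
    intro m
    induction m with
    | zero =>
      intro b hb
      by_cases h1 : b = 1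
      · subst h1; rw [mul_one, len_one]; omega
      · obtain ⟨k, hk⟩ := exists_descent_top h1
        have := len_mul_simpleT_of_gt hk
        omega
    | succ m ih =>
      intro b hb
      by_cases h1 : b = 1
      · subst h1; rw [mul_one, len_one]; omega
      · obtain ⟨k, hk⟩ := exists_descent_top h1
        have hlb := len_mul_simpleT_of_gt hk
        have hrec := ih (b * simpleT k) (by omega)
        have hco : a * b = (a * (b * simpleT k)) * simpleT k := by
          rw [mul_assoc, mul_assoc, simpleT_mul_self, mul_one]
        have := len_mul_simpleT_le (a * (b * simpleT k)) k
        rw [← hco] at this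
        omega
  exact main (len b) b le_rfl

/-- `T_w`'s multiply along length-additive factorizations. -/
lemma TW_mul {R : Type} [CommRing R] {q : R} {TW : Equiv.Perm (Fin r) → Hk R q r}
    (hTW : IsTWH q r TW) {a b : Equiv.Perm (Fin r)}
    (hab : len (a * b) = len a + len b) : TW (a * b) = TW a * TW b := by
  obtain ⟨hTW1, hTW2⟩ := hTW
  have main : ∀ m : ℕ, ∀ b : Equiv.Perm (Fin r), len b ≤ m →
      len (a * b) = len a + len b → TW (a * b) = TW a * TW b := by
    intro m
    induction m with
    | zero =>
      intro b hb hab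
      have hb0 : len b = 0 := Nat.le_zero.mp hb
      have h1 : b = 1 := by
        by_contra h1
        obtain ⟨k, hk⟩ := exists_descent_top h1
        have := len_mul_simpleT_of_gt hk
        omega
      subst h1
      rw [mul_one, hTW1, mul_one]
    | succ m ih =>
      intro b hb hab
      by_cases h1 : b = 1
      · subst h1; rw [mul_one, hTW1, mul_one]
      · obtain ⟨k, hk⟩ := exists_descent_top h1
        set b' := b * simpleT k with hb'
        have hlb : len b = len b' + 1 := len_mul_simpleT_of_gt hk
        have hbb' : b = b' * simpleT k := by
          rw [hb', mul_assoc, simpleT_mul_self, mul_one]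
        have hsub : len (a * b') ≤ len a + len b' := len_subadd a b'
        have hco : a * b = (a * b') * simpleT k := by
          rw [mul_assoc]; exact congrArg (a * ·) hbb'
        -- the multiplication by simpleT k must go up
        have hup : len ((a * b') * simpleT k) = len (a * b') + 1 := by
          rcases len_mul_simpleT_cases (a * b') k with ⟨_, h⟩ | ⟨_, h⟩
          · exact h
          · rw [← hco] at h; omega
        have hab' : len (a * b') = len a + len b' := by
          rw [← hco] at hup; omega
        have hup' : len (b' * simpleT k) = len b' + 1 := by rw [← hbb']; omega
        rw [hco, hTW2 (a * b') k (by rw [← hco, hab, hab']; omega),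
          ih b' (by omega) hab', hbb', hTW2 b' k hup', mul_assoc]
  exact main (len b) b le_rfl hab

end LenMul

section Blocks

variable {n r : ℕ}

lemma psum_mono (lam : Fin n → ℕ) {a b : ℕ} (h : a ≤ b) : psum lam a ≤ psum lam b := by
  unfold psum
  apply Finset.sum_le_sum
  intro i _
  split_ifs with h1 h2
  · exact le_rfl
  · exact absurd (lt_of_lt_of_le h1 h) h2
  · exact Nat.zero_le _
  · exact le_rfl

lemma psum_succ (lam : Fin n → ℕ) (k : Fin n) :
    psum lam (k.val + 1) = psum lam k.val + lam k := by
  unfold psum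
  have key : ∀ i : Fin n, (if (i : ℕ) < k.val + 1 then lam i else 0)
      = (if (i : ℕ) < k.val then lam i else 0) + (if i = k then lam i else 0) := by
    intro i
    by_cases h1 : (i : ℕ) < k.val
    · rw [if_pos (by omega), if_pos h1, if_neg (fun h => by subst h; omega), add_zero]
    · by_cases h2 : i = k
      · subst h2; rw [if_pos (by omega), if_neg h1, if_pos rfl, zero_add]
      · have h3 : (i : ℕ) ≠ k.val := fun h => h2 (Fin.ext h)
        rw [if_neg (by omega), if_neg h1, if_neg h2, add_zero]
  rw [Finset.sum_congr rfl (fun i _ => key i), Finset.sum_add_distrib]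
  simp

lemma psum_total {lam : Fin n → ℕ} (hlam : ∑ i, lam i = r) : psum lam n = r := by
  unfold psum
  rw [← hlam]
  exact Finset.sum_congr rfl (fun i _ => if_pos i.isLt)

lemma exists_block {lam : Fin n → ℕ} (hlam : ∑ i, lam i = r) (j : Fin r) :
    ∃ k : Fin n, InBlock lam k j := by
  classical
  rcases Nat.eq_zero_or_pos n with h0 | hn
  · subst h0
    rw [Finset.univ_eq_empty, Finset.sum_empty] at hlam
    exact absurd j.isLt (by omega)
  set S : Finset (Fin n) := Finset.univ.filter (fun k => psum lam k.val ≤ j.val) with hS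
  have hSne : S.Nonempty := by
    refine ⟨⟨0, hn⟩, ?_⟩
    simp only [hS, Finset.mem_filter, Finset.mem_univ, true_and]
    simp [psum]
  set k₀ := S.max' hSne with hk₀
  have hk₀S : k₀ ∈ S := S.max'_mem hSne
  have hle : psum lam k₀.val ≤ j.val := (Finset.mem_filter.mp hk₀S).2
  refine ⟨k₀, hle, ?_⟩
  rw [← psum_succ]
  by_contra hc
  push_neg at hc
  by_cases hend : k₀.val + 1 = n
  · rw [hend, psum_total hlam] at hc
    exact absurd j.isLt (not_lt.mpr hc)
  · have hlt : k₀.val + 1 < n := by have := k₀.isLt; omega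
    have hmem : (⟨k₀.val + 1, hlt⟩ : Fin n) ∈ S := by
      simp only [hS, Finset.mem_filter, Finset.mem_univ, true_and]
      exact hc
    have h4 : k₀.val + 1 ≤ k₀.val := Fin.le_def.mp (S.le_max' _ hmem)
    omega

lemma block_unique {lam : Fin n → ℕ} {k k' : Fin n} {j : Fin r}
    (h1 : InBlock lam k j) (h2 : InBlock lam k' j) : k = k' := by
  by_contra hne
  have hv : k.val ≠ k'.val := fun h => hne (Fin.ext h)
  rcases lt_or_gt_of_ne hv with h | h
  · have := psum_mono lam (show k.val + 1 ≤ k'.val from h)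
    rw [psum_succ] at this
    obtain ⟨ha, hb⟩ := h1; obtain ⟨hc, hd⟩ := h2
    omega
  · have := psum_mono lam (show k'.val + 1 ≤ k.val from h)
    rw [psum_succ] at this
    obtain ⟨ha, hb⟩ := h1; obtain ⟨hc, hd⟩ := h2
    omega

/-- The "same block" relation of a composition. -/
def Brel (lam : Fin n → ℕ) (i j : Fin r) : Prop :=
  ∃ k : Fin n, InBlock lam k i ∧ InBlock lam k j

lemma Brel_refl {lam : Fin n → ℕ} (hlam : ∑ i, lam i = r) (i : Fin r) :
    Brel lam i i := by
  obtain ⟨k, hk⟩ := exists_block hlam i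
  exact ⟨k, hk, hk⟩

lemma Brel_symm {lam : Fin n → ℕ} (i j : Fin r) (h : Brel lam i j) : Brel lam j i := by
  obtain ⟨k, h1, h2⟩ := h
  exact ⟨k, h2, h1⟩

lemma Brel_trans {lam : Fin n → ℕ} (i j l : Fin r) (h1 : Brel lam i j)
    (h2 : Brel lam j l) : Brel lam i l := by
  obtain ⟨k, ha, hb⟩ := h1
  obtain ⟨k', hc, hd⟩ := h2
  exact ⟨k', block_unique hb hc ▸ ha, hd⟩

lemma Brel_conv {lam : Fin n → ℕ} (i j l : Fin r) (hij : i ≤ j) (hjl : j ≤ l)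
    (h : Brel lam i l) : Brel lam i j := by
  obtain ⟨k, ⟨h1, h2⟩, ⟨h3, h4⟩⟩ := h
  have hijv := Fin.le_def.mp hij
  have hjlv := Fin.le_def.mp hjl
  exact ⟨k, ⟨h1, h2⟩, ⟨by omega, by omega⟩⟩

lemma memYoung_iff_memSB {lam : Fin n → ℕ} (hlam : ∑ i, lam i = r)
    (w : Equiv.Perm (Fin r)) : MemYoung lam w ↔ MemSB (Brel lam) w := by
  constructor
  · intro h j
    obtain ⟨k, hk⟩ := exists_block hlam j
    exact ⟨k, hk, h k j hk⟩
  · intro h k j hkj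
    obtain ⟨k', h1, h2⟩ := h j
    rwa [block_unique h1 hkj] at h2

end Blocks

end Aux

end HCPaper

open HCPaper in
/-- `x_λ T_d = (∑_{u' ∈ D⁻¹_{ν(d⁻¹)} ∩ S_λ} T_{u'}) T_d x_{ν(d)}` in the Hecke algebra,
where `S_{ν(d)} = d⁻¹ S_λ d ∩ S_μ` and `S_{ν(d⁻¹)} = d S_μ d⁻¹ ∩ S_λ`. -/
theorem stmt12 (R : Type) [CommRing R] (q : R) (r n : ℕ) (lam mu : Fin n → ℕ)
    (hlam : ∑ i, lam i = r) (hmu : ∑ i, mu i = r)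
    (d : Equiv.Perm (Fin r)) (hd : MinDouble lam mu d)
    (TW : Equiv.Perm (Fin r) → Hk R q r) (hTW : IsTWH q r TW) :
    xEltH lam TW * TW d
      = (∑ u : Equiv.Perm (Fin r),
          if MemYoung lam u ∧
              ∀ τ : Equiv.Perm (Fin r),
                MemYoung lam τ ∧ MemYoung mu (d⁻¹ * τ * d) → len u ≤ len (u * τ)
            then TW u else 0)
        * TW d
        * (∑ w : Equiv.Perm (Fin r),
            if MemYoung mu w ∧ MemYoung lam (d * w * d⁻¹) then TW w else 0) := by
  classical
  -- Young-subgroup relations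
  have hls := fun i j h => Brel_symm (lam := lam) (r := r) i j h
  have hltr := fun i j l h1 h2 => Brel_trans (lam := lam) (r := r) i j l h1 h2
  have hlc := fun i j l h1 h2 h3 => Brel_conv (lam := lam) (r := r) i j l h1 h2 h3
  have hlr := Brel_refl hlam
  have hms := fun i j h => Brel_symm (lam := mu) (r := r) i j h
  have hmtr := fun i j l h1 h2 => Brel_trans (lam := mu) (r := r) i j l h1 h2
  have hmc := fun i j l h1 h2 h3 => Brel_conv (lam := mu) (r := r) i j l h1 h2 h3
  have hmr := Brel_refl hmu
  have Yl := memYoung_iff_memSB hlam (r := r)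
  have Ym := memYoung_iff_memSB hmu (r := r)
  -- closure of Young subgroups
  have hYlmul : ∀ a b : Equiv.Perm (Fin r), MemYoung lam a → MemYoung lam b →
      MemYoung lam (a * b) := fun a b ha hb =>
    (Yl _).mpr (memSB_mul hltr ((Yl a).mp ha) ((Yl b).mp hb))
  have hYlinv : ∀ a : Equiv.Perm (Fin r), MemYoung lam a → MemYoung lam a⁻¹ :=
    fun a ha => (Yl _).mpr (memSB_inv hls ((Yl a).mp ha))
  have hYlone : MemYoung lam (1 : Equiv.Perm (Fin r)) := fun k j h => by simpa using h
  have hYmone : MemYoung mu (1 : Equiv.Perm (Fin r)) := fun k j h => by simpa using h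
  -- d is increasing on mu-blocks
  have hdinc : ∀ i j : Fin r, i < j → Brel mu i j → d i < d j := by
    intro i j hij hB
    by_contra hc
    have hinc : ¬ IncOn (Brel mu) d := by
      intro h; exact hc (h i j hij hB)
    obtain ⟨k, hBk, hdesc⟩ := exists_descent hms hmtr hmc hinc
    have hmem : MemYoung mu (simpleT k) := (Ym _).mpr (simpleT_memSB hmr hms hBk)
    have hlen := len_mul_simpleT_of_gt hdesc
    have := hd 1 (simpleT k) hYlone hmem
    rw [one_mul] at this
    omega
  -- d⁻¹ is increasing on lam-blocks
  have hdinv : ∀ i j : Fin r, i < j → Brel lam i j → d⁻¹ i < d⁻¹ j := by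
    intro i j hij hB
    by_contra hc
    have hinc : ¬ IncOn (Brel lam) d⁻¹ := by
      intro h; exact hc (h i j hij hB)
    obtain ⟨k, hBk, hdesc⟩ := exists_descent hls hltr hlc hinc
    have hmem : MemYoung lam (simpleT k) := (Yl _).mpr (simpleT_memSB hlr hls hBk)
    have hlen := len_mul_simpleT_of_gt hdesc
    -- len (simpleT k * d) = len d - 1
    have hsinv : (simpleT k)⁻¹ = simpleT k := by
      rw [simpleT]; exact Equiv.swap_inv _ _
    have he : (simpleT k * d)⁻¹ = d⁻¹ * simpleT k := by rw [mul_inv_rev, hsinv]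
    have h2 : len (simpleT k * d) = len (d⁻¹ * simpleT k) := by
      rw [← he, len_inv]
    have := hd (simpleT k) 1 hmem hYmone
    rw [mul_one] at this
    have h5 := len_inv d
    omega
  -- the double-coset intersection relation
  set Bd : Fin r → Fin r → Prop :=
    fun i j => Brel lam i j ∧ Brel mu (d⁻¹ i) (d⁻¹ j) with hBd
  have hdr : ∀ i, Bd i i := fun i => ⟨hlr i, hmr (d⁻¹ i)⟩
  have hds : ∀ i j, Bd i j → Bd j i := fun i j h => ⟨hls _ _ h.1, hms _ _ h.2⟩
  have hdt : ∀ i j l, Bd i j → Bd j l → Bd i l := fun i j l h1 h2 =>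
    ⟨hltr _ _ _ h1.1 h2.1, hmtr _ _ _ h1.2 h2.2⟩
  have hdc : ∀ i j l : Fin r, i ≤ j → j ≤ l → Bd i l → Bd i j := by
    intro i j l hij hjl h
    have hBlij : Brel lam i j := hlc i j l hij hjl h.1
    refine ⟨hBlij, ?_⟩
    rcases eq_or_lt_of_le hij with rfl | hij'
    · exact hmr (d⁻¹ i)
    rcases eq_or_lt_of_le hjl with rfl | hjl'
    · exact h.2
    have h1 : d⁻¹ i < d⁻¹ j := hdinv i j hij' hBlij
    have h2 : d⁻¹ j < d⁻¹ l := hdinv j l hjl' (hltr _ _ _ (hls _ _ hBlij) h.1)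
    exact hmc _ _ _ (le_of_lt h1) (le_of_lt h2) h.2
  -- K = S_{nu(d^{-1})} characterization
  have hK : ∀ τ : Equiv.Perm (Fin r),
      (MemYoung lam τ ∧ MemYoung mu (d⁻¹ * τ * d)) ↔ MemSB Bd τ := by
    intro τ
    constructor
    · rintro ⟨h1, h2⟩ j
      refine ⟨(Yl τ).mp h1 j, ?_⟩
      have h3 := (Ym _).mp h2 (d⁻¹ j)
      simpa [Equiv.Perm.mul_apply] using h3
    · intro h
      refine ⟨(Yl τ).mpr (fun j => (h j).1), (Ym _).mpr (fun j => ?_)⟩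
      have h3 := (h (d j)).2
      simpa [Equiv.Perm.mul_apply] using h3
  -- characterization of the minimality condition
  have hPu : ∀ u : Equiv.Perm (Fin r),
      (MemYoung lam u ∧ ∀ τ : Equiv.Perm (Fin r),
        MemYoung lam τ ∧ MemYoung mu (d⁻¹ * τ * d) → len u ≤ len (u * τ)) ↔
      (MemYoung lam u ∧ IncOn Bd u) := by
    intro u
    constructor
    · rintro ⟨h1, h2⟩
      refine ⟨h1, ?_⟩
      by_contra hinc
      obtain ⟨k, hBk, hdesc⟩ := exists_descent hds hdt hdc hinc
      have hmem : MemSB Bd (simpleT k) := simpleT_memSB hdr hds hBk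
      have h3 := h2 (simpleT k) ((hK _).mpr hmem)
      have h4 := len_mul_simpleT_of_gt hdesc
      omega
    · rintro ⟨h1, h2⟩
      refine ⟨h1, fun τ hτ => ?_⟩
      rw [lenAdd hds hdt hdc h2 ((hK τ).mp hτ)]
      omega
  -- length additivity with d
  have hlend : ∀ w : Equiv.Perm (Fin r), MemYoung lam w →
      len (w * d) = len w + len d := by
    intro w hw
    have h1 : len (d⁻¹ * w⁻¹) = len d⁻¹ + len w⁻¹ :=
      lenAdd (B := Brel lam) hls hltr hlc (fun i j hij hB => hdinv i j hij hB)
        (memSB_inv hls ((Yl w).mp hw))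
    have h2 : (w * d)⁻¹ = d⁻¹ * w⁻¹ := mul_inv_rev w d
    have h3 := len_inv (w * d)
    rw [h2, h1, len_inv, len_inv] at h3
    omega
  have hlendσ : ∀ σ : Equiv.Perm (Fin r), MemYoung mu σ →
      len (d * σ) = len d + len σ := fun σ hσ =>
    lenAdd (B := Brel mu) hms hmtr hmc (fun i j hij hB => hdinc i j hij hB)
      ((Ym σ).mp hσ)
  -- the per-term identity
  have hterm : ∀ u σ : Equiv.Perm (Fin r), MemYoung lam u → IncOn Bd u →
      MemYoung mu σ → MemSB Bd (d * σ * d⁻¹) →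
      TW u * TW d * TW σ = TW (u * (d * σ * d⁻¹)) * TW d := by
    intro u σ hul hu hσm hτ
    set τ : Equiv.Perm (Fin r) := d * σ * d⁻¹ with hτdef
    have hτl : MemYoung lam τ := (Yl τ).mpr fun j => (hτ j).1
    have hτd : τ * d = d * σ := by rw [hτdef]; group
    have h1 : len (d * σ) = len d + len σ := hlendσ σ hσm
    have h2 : len (τ * d) = len τ + len d := hlend τ hτl
    have h3 : len (u * τ) = len u + len τ := lenAdd hds hdt hdc hu hτ
    have huτl : MemYoung lam (u * τ) := hYlmul u τ hul hτl
    have h4 : len (u * τ * d) = len (u * τ) + len d := hlend _ huτl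
    have h5 : len (u * (τ * d)) = len u + len (τ * d) := by
      rw [← mul_assoc]; omega
    calc TW u * TW d * TW σ = TW u * (TW d * TW σ) := mul_assoc _ _ _
      _ = TW u * TW (d * σ) := by rw [TW_mul hTW h1]
      _ = TW u * TW (τ * d) := by rw [hτd]
      _ = TW (u * (τ * d)) := (TW_mul hTW h5).symm
      _ = TW ((u * τ) * d) := congrArg TW (mul_assoc u τ d).symm
      _ = TW (u * τ) * TW d := TW_mul hTW h4
  -- choice of factorization
  have hex : ∀ w : Equiv.Perm (Fin r),
      ∃ p : Equiv.Perm (Fin r) × Equiv.Perm (Fin r),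
        IncOn Bd p.1 ∧ MemSB Bd p.2 ∧ w = p.1 * p.2 := by
    intro w
    obtain ⟨u, τ, h1, h2, h3⟩ := exists_factorization hdr hds hdt hdc w
    exact ⟨(u, τ), h1, h2, h3⟩
  choose f hf1 hf2 hf3 using hex
  -- sum manipulations
  have lhs_eq : xEltH lam TW * TW d
      = ∑ w : Equiv.Perm (Fin r), if MemYoung lam w then TW w * TW d else 0 := by
    rw [xEltH, Finset.sum_mul]
    exact Finset.sum_congr rfl fun w _ => by
      by_cases h : MemYoung lam w <;> simp [h]
  have rhs_eq : (∑ u : Equiv.Perm (Fin r),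
        if MemYoung lam u ∧ ∀ τ : Equiv.Perm (Fin r),
            MemYoung lam τ ∧ MemYoung mu (d⁻¹ * τ * d) → len u ≤ len (u * τ)
          then TW u else 0) * TW d
      * (∑ w : Equiv.Perm (Fin r),
          if MemYoung mu w ∧ MemYoung lam (d * w * d⁻¹) then TW w else 0)
      = ∑ p : Equiv.Perm (Fin r) × Equiv.Perm (Fin r),
          if (MemYoung lam p.1 ∧ ∀ τ : Equiv.Perm (Fin r),
              MemYoung lam τ ∧ MemYoung mu (d⁻¹ * τ * d) → len p.1 ≤ len (p.1 * τ))
            ∧ (MemYoung mu p.2 ∧ MemYoung lam (d * p.2 * d⁻¹))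
          then TW p.1 * TW d * TW p.2 else 0 := by
    rw [Finset.sum_mul, Finset.sum_mul_sum, Fintype.sum_prod_type]
    refine Finset.sum_congr rfl fun u _ => Finset.sum_congr rfl fun σ _ => ?_
    by_cases h1 : MemYoung lam u ∧ ∀ τ : Equiv.Perm (Fin r),
        MemYoung lam τ ∧ MemYoung mu (d⁻¹ * τ * d) → len u ≤ len (u * τ)
    · by_cases h2 : MemYoung mu σ ∧ MemYoung lam (d * σ * d⁻¹)
      · rw [if_pos h1, if_pos h2, if_pos ⟨h1, h2⟩]
      · rw [if_pos h1, if_neg h2, if_neg (fun hc => h2 hc.2), mul_zero]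
    · rw [if_neg h1, zero_mul, zero_mul, if_neg (fun hc : _ ∧ _ => h1 hc.1)]
  rw [lhs_eq, rhs_eq]
  rw [← Finset.sum_filter (fun w => MemYoung lam w)
    (fun w => TW w * TW d)]
  rw [← Finset.sum_filter]
  refine (Finset.sum_nbij' (i := fun (w : Equiv.Perm (Fin r)) =>
      ((f w).1, d⁻¹ * (f w).2 * d))
    (j := fun p : Equiv.Perm (Fin r) × Equiv.Perm (Fin r) => p.1 * (d * p.2 * d⁻¹))
    ?_ ?_ ?_ ?_ ?_)
  · -- forward maps into
    intro w hw
    rw [Finset.mem_filter] at hw ⊢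
    obtain ⟨-, hwl⟩ := hw
    have hu := hf1 w
    have hτ := hf2 w
    have hfw := hf3 w
    have hτboth := (hK (f w).2).mpr hτ
    have hul : MemYoung lam (f w).1 := by
      have he : (f w).1 = w * ((f w).2)⁻¹ := eq_mul_inv_iff_mul_eq.mpr (hf3 w).symm
      rw [he]
      exact hYlmul _ _ hwl (hYlinv _ hτboth.1)
    refine ⟨Finset.mem_univ _, (hPu _).mpr ⟨hul, hu⟩, hτboth.2, ?_⟩
    have he2 : d * (d⁻¹ * (f w).2 * d) * d⁻¹ = (f w).2 := by group
    rw [he2]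
    exact hτboth.1
  · -- reverse maps into
    intro p hp
    rw [Finset.mem_filter] at hp ⊢
    obtain ⟨-, hP1, hP2⟩ := hp
    exact ⟨Finset.mem_univ _, hYlmul _ _ ((hPu p.1).mp hP1).1 hP2.2⟩
  · -- left inverse
    intro w hw
    have he : d * (d⁻¹ * (f w).2 * d) * d⁻¹ = (f w).2 := by group
    show (f w).1 * (d * (d⁻¹ * (f w).2 * d) * d⁻¹) = w
    rw [he]
    exact (hf3 w).symm
  · -- right inverse
    intro p hp
    rw [Finset.mem_filter] at hp
    obtain ⟨-, hP1, hP2⟩ := hp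
    set τ : Equiv.Perm (Fin r) := d * p.2 * d⁻¹ with hτdef
    have hτmem : MemSB Bd τ := by
      refine (hK τ).mp ⟨hP2.2, ?_⟩
      have he : d⁻¹ * τ * d = p.2 := by rw [hτdef]; group
      rw [he]
      exact hP2.1
    have hfact : (f (p.1 * τ)).1 * (f (p.1 * τ)).2 = p.1 * τ := (hf3 _).symm
    have huniq := factorization_unique hds hdt (hf1 (p.1 * τ)) ((hPu p.1).mp hP1).2
      (hf2 (p.1 * τ)) hτmem hfact
    have he2 : d⁻¹ * τ * d = p.2 := by rw [hτdef]; group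
    have e2' : d⁻¹ * (f (p.1 * τ)).2 * d = p.2 := by rw [huniq.2]; exact he2
    show ((f (p.1 * τ)).1, d⁻¹ * (f (p.1 * τ)).2 * d) = p
    rw [huniq.1, e2']
  · -- values agree
    intro w hw
    rw [Finset.mem_filter] at hw
    obtain ⟨-, hwl⟩ := hw
    have hτ := hf2 w
    have hτboth := (hK (f w).2).mpr hτ
    have hul : MemYoung lam (f w).1 := by
      have he : (f w).1 = w * ((f w).2)⁻¹ := eq_mul_inv_iff_mul_eq.mpr (hf3 w).symm
      rw [he]
      exact hYlmul _ _ hwl (hYlinv _ hτboth.1)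
    have hτmem : MemSB Bd (d * (d⁻¹ * (f w).2 * d) * d⁻¹) := by
      have he : d * (d⁻¹ * (f w).2 * d) * d⁻¹ = (f w).2 := by group
      rw [he]; exact hτ
    have := hterm (f w).1 (d⁻¹ * (f w).2 * d) hul (hf1 w) hτboth.2 hτmem
    have he : d * (d⁻¹ * (f w).2 * d) * d⁻¹ = (f w).2 := by group
    rw [he] at this
    rw [← hf3 w] at this
    exact this.symm
end

section
/- Assume n ≥ r, and let e_ω ∈ Q_q(n,r;R) be the idempotent given by projection onto the summand x_ω H^c_{r,R} with ω = (1^r) (so x_ω = 1). Then evaluation at x_ω gives an algebra isomorphism e_ω Q_q(n,r;R) e_ω ≅ H^c_{r,R}, and a Q_q(n,r;R)-H^c_{r,R}-bimodule isomorphism Q_q(n,r;R) e_ω ≅ ⊕_{λ ∈ Λ(n,r)} x_λ H^c_{r,R}. -/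
namespace HCPaper

noncomputable section

/-- `TW` is the standard basis `w ↦ T_w` of the Hecke subalgebra of `H^c_{r,R}`:
`T_1 = 1` and `T_{w s_k} = T_w T_{s_k}` whenever `ℓ(w s_k) = ℓ(w) + 1`. -/
def IsTW {R : Type} [CommRing R] (q : R) (r : ℕ) (TW : Equiv.Perm (Fin r) → HC R q r) :
    Prop :=
  TW 1 = 1 ∧ ∀ (w : Equiv.Perm (Fin r)) (k : Fin (r - 1)),
    len (w * simpleT k) = len w + 1 → TW (w * simpleT k) = TW w * TT R q r k

/-- The element `x_λ = ∑_{w ∈ S_λ} T_w` of `H^c_{r,R}`. -/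
def xElt {R : Type} [CommRing R] {q : R} {r n : ℕ} (lam : Fin n → ℕ)
    (TW : Equiv.Perm (Fin r) → HC R q r) : HC R q r :=
  ∑ w : Equiv.Perm (Fin r), if MemYoung lam w then TW w else 0

/-- The element `c_{q,r} = q^{r-1} c_1 + q^{r-2} c_2 + ⋯ + c_r` of `H^c_{r,R}`. -/
def cqr (R : Type) [CommRing R] (q : R) (r : ℕ) : HC R q r :=
  ∑ j : Fin r, q ^ (r - 1 - (j : ℕ)) • CC R q r j

/-- The element `c'_{q,r} = c_1 + q c_2 + ⋯ + q^{r-1} c_r` of `H^c_{r,R}`. -/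
def cqr' (R : Type) [CommRing R] (q : R) (r : ℕ) : HC R q r :=
  ∑ j : Fin r, q ^ (j : ℕ) • CC R q r j

end

end HCPaper

namespace HCPaper

noncomputable section

/-- The set `Λ(n,r)` of compositions of `r` into `n` parts. -/
abbrev Lam (n r : ℕ) := {lam : Fin n → ℕ // ∑ i, lam i = r}

/-- The right ideal `x_λ H^c_{r,R}` as a right `H^c`-module (i.e. `(H^c)ᵐᵒᵖ`-module). -/
abbrev Xsub (R : Type) [CommRing R] (q : R) {n r : ℕ}
    (TW : Equiv.Perm (Fin r) → HC R q r) (l : Lam n r) :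
    Submodule (HC R q r)ᵐᵒᵖ (HC R q r) :=
  Submodule.span (HC R q r)ᵐᵒᵖ {xElt l.1 TW}

/-- The tensor space `⊕_{λ ∈ Λ(n,r)} x_λ H^c_{r,R}`. -/
abbrev TSp (R : Type) [CommRing R] (q : R) (n r : ℕ)
    (TW : Equiv.Perm (Fin r) → HC R q r) :=
  DirectSum (Lam n r) fun l => ↥(Xsub R q TW l)

end

end HCPaper

namespace HCPaper

noncomputable section

variable {R : Type} [CommRing R] {q : R} {n r : ℕ}

lemma psum_omega (hn : r ≤ n) (lam : Fin n → ℕ)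
    (hω : ∀ i : Fin n, lam i = if (i : ℕ) < r then 1 else 0)
    {k : ℕ} (hk : k ≤ r) : psum lam k = k := by
  unfold psum
  have h1 : ∀ i : Fin n, (if (i : ℕ) < k then lam i else 0)
      = if (i : ℕ) < k then 1 else 0 := by
    intro i
    by_cases h : (i : ℕ) < k
    · simp [h, hω i, lt_of_lt_of_le h hk]
    · simp [h]
  rw [Finset.sum_congr rfl (fun i _ => h1 i),
    Fin.sum_univ_eq_sum_range (fun i => if i < k then 1 else 0) n]
  have h2 : Finset.filter (fun i => i < k) (Finset.range n) = Finset.range k := by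
    ext i
    simp only [Finset.mem_filter, Finset.mem_range]
    omega
  rw [Finset.sum_ite, Finset.sum_const, Finset.sum_const, h2]
  simp

lemma memYoung_omega (hn : r ≤ n) (lam : Fin n → ℕ)
    (hω : ∀ i : Fin n, lam i = if (i : ℕ) < r then 1 else 0)
    (w : Equiv.Perm (Fin r)) : MemYoung lam w ↔ w = 1 := by
  constructor
  · intro h
    apply Equiv.ext
    intro j
    have hjn : (j : ℕ) < n := lt_of_lt_of_le j.isLt hn
    set k : Fin n := ⟨(j : ℕ), hjn⟩ with hk
    have hps : psum lam (k : ℕ) = (j : ℕ) := psum_omega hn lam hω (le_of_lt j.isLt)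
    have hlk : lam k = 1 := by rw [hω k]; simp [hk, j.isLt]
    have hb : InBlock lam k j := by
      constructor
      · rw [hps]
      · rw [hps, hlk]; omega
    obtain ⟨hl, hr⟩ := h k j hb
    rw [hps] at hl
    rw [hps, hlk] at hr
    have : ((w j : Fin r) : ℕ) = (j : ℕ) := by omega
    simp only [Equiv.Perm.one_apply]
    exact Fin.ext this
  · rintro rfl
    intro k j hb
    simpa using hb

lemma xElt_omega (hn : r ≤ n) (lam : Fin n → ℕ)
    (hω : ∀ i : Fin n, lam i = if (i : ℕ) < r then 1 else 0)
    (TW : Equiv.Perm (Fin r) → HC R q r) (hTW1 : TW 1 = 1) :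
    xElt lam TW = 1 := by
  unfold xElt
  have h1 : ∀ w : Equiv.Perm (Fin r),
      (if MemYoung lam w then TW w else 0) = if w = 1 then TW w else 0 := by
    intro w
    exact if_congr (memYoung_omega hn lam hω w) rfl rfl
  rw [Finset.sum_congr rfl (fun w _ => h1 w), Finset.sum_ite_eq' Finset.univ 1 TW]
  simp [hTW1]

end

end HCPaper

open HCPaper in
/-- For `n ≥ r` and `ω = (1^r)` (so `x_ω = 1`), with
`Q_q(n,r;R) = End_{H^c}(⊕_{λ} x_λ H^c)` and `e_ω` the projection onto the summand `ω`:
there is an algebra embedding `Φ : H^c → Q_q(n,r;R)` (acting by left multiplication on the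
summand `ω`) realizing the isomorphism `e_ω Q e_ω ≅ H^c` (every corner element `e_ω f e_ω`
is `Φ h` for a unique `h`), and evaluation at `x_ω` is a `Q`-`H^c`-bimodule isomorphism
`Q e_ω ≅ ⊕_λ x_λ H^c`. -/
theorem stmt19 (R : Type) [CommRing R] (h2 : ringChar R ≠ 2) (q : R) (n r : ℕ)
    (hn : r ≤ n)
    (TW : Equiv.Perm (Fin r) → HC R q r) (hTW : IsTW q r TW)
    (ω : Lam n r) (hω : ∀ i : Fin n, ω.1 i = if (i : ℕ) < r then 1 else 0)
    (eW : Module.End (HC R q r)ᵐᵒᵖ (TSp R q n r TW))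
    (heW : eW = (DirectSum.lof (HC R q r)ᵐᵒᵖ (Lam n r) (fun l => ↥(Xsub R q TW l)) ω).comp
        (DirectSum.component (HC R q r)ᵐᵒᵖ (Lam n r) (fun l => ↥(Xsub R q TW l)) ω)) :
    ∃ Φ : HC R q r → Module.End (HC R q r)ᵐᵒᵖ (TSp R q n r TW),
      Function.Injective Φ ∧
      (∀ a b : HC R q r, Φ (a * b) = Φ a * Φ b) ∧
      (∀ a b : HC R q r, Φ (a + b) = Φ a + Φ b) ∧
      Φ 1 = eW ∧
      (∀ (h : HC R q r) (t : TSp R q n r TW),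
        ((Φ h t) ω : HC R q r) = h * ((t ω : HC R q r)) ∧
        ∀ l : Lam n r, l ≠ ω → ((Φ h t) l : HC R q r) = 0) ∧
      (∀ f : Module.End (HC R q r)ᵐᵒᵖ (TSp R q n r TW), ∃ h : HC R q r,
        eW * f * eW = Φ h) ∧
      (∀ u : TSp R q n r TW,
        ((u ω : HC R q r) = xElt ω.1 TW ∧ ∀ l : Lam n r, l ≠ ω → (u l : HC R q r) = 0) →
        Function.Bijective
          (fun f : {f : Module.End (HC R q r)ᵐᵒᵖ (TSp R q n r TW) // f * eW = f} =>
            f.1 u) ∧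
        ∀ (f : Module.End (HC R q r)ᵐᵒᵖ (TSp R q n r TW)) (h : HC R q r) (l : Lam n r),
          (((f * Φ h) u) l : HC R q r) = ((f u) l : HC R q r) * h) := by
  classical
  have hx : xElt ω.1 TW = 1 := xElt_omega hn ω.1 hω TW hTW.1
  -- every element lies in the span of 1
  have mem1 : ∀ a : HC R q r, a ∈ Xsub R q TW ω := by
    intro a
    have ha : a = MulOpposite.op a • (xElt ω.1 TW) := by
      rw [hx, op_smul_eq_mul, one_mul]
    rw [ha]
    exact Submodule.smul_mem _ _ (Submodule.mem_span_singleton_self _)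
  -- componentwise extensionality
  have extc : ∀ t s : TSp R q n r TW,
      (∀ l, ((t l : HC R q r)) = (s l : HC R q r)) → t = s := by
    intro t s h
    exact DFunLike.ext t s (fun l => Subtype.ext (h l))
  -- components of scalar multiples
  have hadd : ∀ (t s : TSp R q n r TW) (l : Lam n r),
      (((t + s) l : Xsub R q TW l) : HC R q r)
        = (t l : HC R q r) + (s l : HC R q r) := fun _ _ _ => rfl
  have hsm : ∀ (a : (HC R q r)ᵐᵒᵖ) (t : TSp R q n r TW) (l : Lam n r),
      (((a • t) l : HC R q r)) = (t l : HC R q r) * a.unop := by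
    intro a t l
    rw [DFinsupp.smul_apply]
    rfl
  -- left multiplication as a linear map over the opposite ring
  let lmul : HC R q r → (HC R q r →ₗ[(HC R q r)ᵐᵒᵖ] HC R q r) := fun h =>
    { toFun := fun x => h * x
      map_add' := fun x y => mul_add h x y
      map_smul' := fun a x => by
        simp only [MulOpposite.smul_eq_mul_unop, RingHom.id_apply, mul_assoc] }
  let Φ : HC R q r → Module.End (HC R q r)ᵐᵒᵖ (TSp R q n r TW) := fun h =>
    (DirectSum.lof (HC R q r)ᵐᵒᵖ (Lam n r) (fun l => ↥(Xsub R q TW l)) ω).comp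
      (LinearMap.codRestrict (Xsub R q TW ω)
        ((lmul h).comp ((Xsub R q TW ω).subtype.comp
          (DirectSum.component (HC R q r)ᵐᵒᵖ (Lam n r) (fun l => ↥(Xsub R q TW l)) ω)))
        (fun t => mem1 _))
  -- components of Φ h t
  have hΦω : ∀ (h : HC R q r) (t : TSp R q n r TW),
      ((Φ h t) ω : HC R q r) = h * (t ω : HC R q r) := by
    intro h t
    show ((DirectSum.lof (HC R q r)ᵐᵒᵖ (Lam n r) (fun l => ↥(Xsub R q TW l)) ω _) ω
      : HC R q r) = _
    rw [DirectSum.lof_apply]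
    rfl
  have hΦne : ∀ (h : HC R q r) (t : TSp R q n r TW) (l : Lam n r), l ≠ ω →
      ((Φ h t) l : HC R q r) = 0 := by
    intro h t l hl
    show ((DirectSum.lof (HC R q r)ᵐᵒᵖ (Lam n r) (fun l => ↥(Xsub R q TW l)) ω _) l
      : HC R q r) = 0
    rw [DirectSum.lof_eq_of, DirectSum.of_eq_of_ne _ _ _ hl]
    rfl
  -- components of eW t
  have heWω : ∀ t : TSp R q n r TW, ((eW t) ω : HC R q r) = (t ω : HC R q r) := by
    intro t
    rw [heW]
    show ((DirectSum.lof (HC R q r)ᵐᵒᵖ (Lam n r) (fun l => ↥(Xsub R q TW l)) ω _) ω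
      : HC R q r) = _
    rw [DirectSum.lof_apply]
    rfl
  have heWne : ∀ (t : TSp R q n r TW) (l : Lam n r), l ≠ ω →
      ((eW t) l : HC R q r) = 0 := by
    intro t l hl
    rw [heW]
    show ((DirectSum.lof (HC R q r)ᵐᵒᵖ (Lam n r) (fun l => ↥(Xsub R q TW l)) ω _) l
      : HC R q r) = 0
    rw [DirectSum.lof_eq_of, DirectSum.of_eq_of_ne _ _ _ hl]
    rfl
  -- the canonical element uu with ω-component 1
  let uu : TSp R q n r TW :=
    DirectSum.lof (HC R q r)ᵐᵒᵖ (Lam n r) (fun l => ↥(Xsub R q TW l)) ω ⟨1, mem1 1⟩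
  have huuω : (uu ω : HC R q r) = 1 := by
    show ((DirectSum.lof (HC R q r)ᵐᵒᵖ (Lam n r) (fun l => ↥(Xsub R q TW l)) ω _) ω
      : HC R q r) = 1
    rw [DirectSum.lof_apply]
  have huune : ∀ l : Lam n r, l ≠ ω → (uu l : HC R q r) = 0 := by
    intro l hl
    show ((DirectSum.lof (HC R q r)ᵐᵒᵖ (Lam n r) (fun l => ↥(Xsub R q TW l)) ω _) l
      : HC R q r) = 0
    rw [DirectSum.lof_eq_of, DirectSum.of_eq_of_ne _ _ _ hl]
    rfl
  -- eW t = op (t ω) • uu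
  have heWu : ∀ t : TSp R q n r TW,
      eW t = MulOpposite.op ((t ω : HC R q r)) • uu := by
    intro t
    apply extc
    intro l
    by_cases hl : l = ω
    · subst hl
      rw [heWω, hsm, huuω, one_mul]
      rfl
    · rw [heWne t l hl, hsm, huune l hl, zero_mul]
  refine ⟨Φ, ?_, ?_, ?_, ?_, ?_, ?_, ?_⟩
  · -- injective
    intro a b hab
    have := congrArg (fun f : Module.End (HC R q r)ᵐᵒᵖ (TSp R q n r TW) =>
      ((f uu) ω : HC R q r)) hab
    simpa [hΦω, huuω] using this
  · -- multiplicative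
    intro a b
    apply LinearMap.ext
    intro t
    apply extc
    intro l
    by_cases hl : l = ω
    · subst hl
      rw [hΦω, Module.End.mul_apply, hΦω, hΦω, mul_assoc]
    · rw [hΦne _ _ _ hl, Module.End.mul_apply, hΦne _ _ _ hl]
  · -- additive
    intro a b
    apply LinearMap.ext
    intro t
    apply extc
    intro l
    by_cases hl : l = ω
    · subst hl
      rw [LinearMap.add_apply, hadd (Φ a t) (Φ b t) _]
      rw [hΦω, hΦω, hΦω, add_mul]
    · rw [LinearMap.add_apply, hadd (Φ a t) (Φ b t) l,
        hΦne _ _ _ hl, hΦne _ _ _ hl, hΦne _ _ _ hl, add_zero]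
  · -- Φ 1 = eW
    apply LinearMap.ext
    intro t
    apply extc
    intro l
    by_cases hl : l = ω
    · subst hl
      rw [hΦω, one_mul, heWω]
    · rw [hΦne _ _ _ hl, heWne t l hl]
  · -- action description
    intro h t
    exact ⟨hΦω h t, fun l hl => hΦne h t l hl⟩
  · -- corner is in the image
    intro f
    refine ⟨((f uu) ω : HC R q r), ?_⟩
    apply LinearMap.ext
    intro t
    apply extc
    intro l
    have hfe : (eW * f * eW) t = eW (f (eW t)) := rfl
    rw [hfe, heWu t, map_smul, map_smul]
    by_cases hl : l = ω
    · subst hl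
      rw [hsm, heWω, hΦω]
      rfl
    · rw [hsm, heWne _ _ hl, zero_mul, hΦne _ _ _ hl]
  · -- the bimodule isomorphism part
    intro u hu
    have huq : u = uu := by
      apply extc
      intro l
      by_cases hl : l = ω
      · subst hl
        rw [hu.1, hx, huuω]
      · rw [hu.2 l hl, huune l hl]
    subst huq
    constructor
    · constructor
      · -- injective
        rintro ⟨f, hf⟩ ⟨g, hg⟩ hfg
        simp only at hfg
        apply Subtype.ext
        apply LinearMap.ext
        intro t
        have h1 : f t = f (eW t) := by
          conv_lhs => rw [← hf]
          rfl
        have h2 : g t = g (eW t) := by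
          conv_lhs => rw [← hg]
          rfl
        rw [h1, h2, heWu t, map_smul, map_smul, hfg]
      · -- surjective
        intro v
        refine ⟨⟨{ toFun := fun t => MulOpposite.op ((t ω : HC R q r)) • v
                   map_add' := ?_
                   map_smul' := ?_ }, ?_⟩, ?_⟩
        · intro t s
          show MulOpposite.op (((t + s) ω : HC R q r)) • v
              = MulOpposite.op ((t ω : HC R q r)) • v + MulOpposite.op ((s ω : HC R q r)) • v
          rw [hadd, MulOpposite.op_add, add_smul]
        · intro a t
          show MulOpposite.op (((a • t) ω : HC R q r)) • v
              = (RingHom.id ((HC R q r)ᵐᵒᵖ)) a • (MulOpposite.op ((t ω : HC R q r)) • v)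
          rw [hsm, RingHom.id_apply, MulOpposite.op_mul, MulOpposite.op_unop, mul_smul]
        · apply LinearMap.ext
          intro t
          show MulOpposite.op (((eW t) ω : HC R q r)) • v = _
          rw [heWω]
          rfl
        · show MulOpposite.op ((uu ω : HC R q r)) • v = v
          rw [huuω, MulOpposite.op_one, one_smul]
    · intro f h l
      have hΦu : Φ h uu = MulOpposite.op h • uu := by
        apply extc
        intro l'
        by_cases hl' : l' = ω
        · subst hl'
          rw [hΦω, huuω, mul_one, hsm, huuω, one_mul]
          rfl
        · rw [hΦne _ _ _ hl', hsm, huune l' hl', zero_mul]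
      have : (f * Φ h) uu = f (Φ h uu) := rfl
      rw [this, hΦu, map_smul, hsm]
      rfl
end
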